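/- arXiv:1708.08410 — 4 statements merged into one kernel-verified Lean document; each statement's English description precedes it below -/
import Mathlib

section
/- Let q be a positive integer, χ a Dirichlet character modulo q (extended by zero to integers not coprime to q), and λ: ℕ₊ → ℂ a function satisfying the Hecke relation λ(m)λ(n) = Σ_{d | gcd(m,n)} χ(d) λ(mn/d²) for all positive integers m, n. Then for every positive integer N, Σ_{(n₁,n₂,n₃,n₄): n₁n₂n₃n₄ = N} λ(n₁)λ(n₂)λ(n₃)λ(n₄) = Σ_{(j,d,m): j²d²m = N} χ(j) τ(j) χ(d) λ(m) · (Σ_{(m₁,m₂): m₁m₂ = m} τ(d m₁) τ(d m₂)), where all sums are over ordered tuples of positive integers with the indicated product constraints. -/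
open Finset

private lemma flatten_sum {α γ β : Type*} [AddCommMonoid β] [DecidableEq γ]
    (s : Finset α) (t : α → Finset γ) (u : Finset γ) (h : ∀ p ∈ s, t p ⊆ u)
    (f : α → γ → β) :
    ∑ p ∈ s, ∑ e ∈ t p, f p e
      = ∑ x ∈ (s ×ˢ u).filter (fun x => x.2 ∈ t x.1), f x.1 x.2 := by
  rw [Finset.sum_filter, Finset.sum_product]
  refine Finset.sum_congr rfl fun p hp => ?_
  simp only []
  rw [Finset.sum_ite_mem, Finset.inter_eq_right.mpr (h p hp)]

private lemma card_dA (n : ℕ) : n.divisorsAntidiagonal.card = n.divisors.card := by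
  rw [← Nat.map_div_right_divisors, Finset.card_map]

namespace HFS

def QQ (N : ℕ) : Finset (ℕ × ℕ × ℕ × ℕ) :=
  (Finset.Icc 1 N ×ˢ Finset.Icc 1 N ×ˢ Finset.Icc 1 N ×ˢ Finset.Icc 1 N).filter
    (fun p => p.1 * p.2.1 * p.2.2.1 * p.2.2.2 = N)

def S1 (N : ℕ) : Finset ((ℕ × ℕ × ℕ × ℕ) × ℕ) :=
  (QQ N ×ˢ N.divisors).filter (fun x => x.2 ∈ (Nat.gcd x.1.1 x.1.2.1).divisors)

def S2 (N : ℕ) : Finset (((ℕ × ℕ × ℕ × ℕ) × ℕ) × ℕ) :=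
  (S1 N ×ˢ N.divisors).filter (fun x => x.2 ∈ (Nat.gcd x.1.1.2.2.1 x.1.1.2.2.2).divisors)

def WW (N : ℕ) : Finset ((((ℕ × ℕ × ℕ × ℕ) × ℕ) × ℕ) × ℕ) :=
  (S2 N ×ˢ N.divisors).filter
    (fun x => x.2 ∈ (Nat.gcd (x.1.1.1.1 * x.1.1.1.2.1 / x.1.1.2 ^ 2)
      (x.1.1.1.2.2.1 * x.1.1.1.2.2.2 / x.1.2 ^ 2)).divisors)

def RR (N : ℕ) : Finset (ℕ × ℕ × ℕ) :=
  (N.divisors ×ˢ N.divisors ×ˢ N.divisors).filter (fun p => p.1 ^ 2 * p.2.1 ^ 2 * p.2.2 = N)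

def V1 (N : ℕ) : Finset ((ℕ × ℕ × ℕ) × ℕ × ℕ) :=
  (RR N ×ˢ (N.divisors ×ˢ N.divisors)).filter (fun x => x.2 ∈ x.1.1.divisorsAntidiagonal)

def V2 (N : ℕ) : Finset (((ℕ × ℕ × ℕ) × ℕ × ℕ) × ℕ × ℕ) :=
  (V1 N ×ˢ (N.divisors ×ˢ N.divisors)).filter (fun x => x.2 ∈ x.1.1.2.2.divisorsAntidiagonal)

def V3 (N : ℕ) : Finset ((((ℕ × ℕ × ℕ) × ℕ × ℕ) × ℕ × ℕ) × ℕ × ℕ) :=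
  (V2 N ×ˢ (N.divisors ×ˢ N.divisors)).filter
    (fun x => x.2 ∈ (x.1.1.1.2.1 * x.1.2.1).divisorsAntidiagonal)

def V4 (N : ℕ) : Finset (((((ℕ × ℕ × ℕ) × ℕ × ℕ) × ℕ × ℕ) × ℕ × ℕ) × ℕ × ℕ) :=
  (V3 N ×ˢ (N.divisors ×ˢ N.divisors)).filter
    (fun x => x.2 ∈ (x.1.1.1.1.2.1 * x.1.1.2.2).divisorsAntidiagonal)

lemma mem_WW {N : ℕ} (hN : 0 < N) (n₁ n₂ n₃ n₄ e₁ e₂ f : ℕ) :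
    ((((n₁, n₂, n₃, n₄), e₁), e₂), f) ∈ WW N ↔
      n₁ * n₂ * n₃ * n₄ = N ∧ 0 < e₁ ∧ 0 < e₂ ∧ 0 < f ∧
      e₁ ∣ n₁ ∧ e₁ ∣ n₂ ∧ e₂ ∣ n₃ ∧ e₂ ∣ n₄ ∧
      f ∣ n₁ * n₂ / e₁ ^ 2 ∧ f ∣ n₃ * n₄ / e₂ ^ 2 := by
  have hN0 : N ≠ 0 := hN.ne'
  simp only [WW, S2, S1, QQ, Finset.mem_filter, Finset.mem_product, Finset.mem_Icc,
    Nat.mem_divisors]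
  constructor
  · rintro ⟨⟨⟨⟨⟨⟨⟨-, hprod⟩, -⟩, he₁g, -⟩, -⟩, he₂g, -⟩, -⟩, hfg, -⟩
    have h11 : e₁ ∣ n₁ := he₁g.trans (Nat.gcd_dvd_left _ _)
    have h12 : e₁ ∣ n₂ := he₁g.trans (Nat.gcd_dvd_right _ _)
    have h21 : e₂ ∣ n₃ := he₂g.trans (Nat.gcd_dvd_left _ _)
    have h22 : e₂ ∣ n₄ := he₂g.trans (Nat.gcd_dvd_right _ _)
    have hn₁ : 0 < n₁ := by
      rcases Nat.eq_zero_or_pos n₁ with rfl | h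
      · simp at hprod; omega
      · exact h
    have hn₂ : 0 < n₂ := by
      rcases Nat.eq_zero_or_pos n₂ with rfl | h
      · simp at hprod; omega
      · exact h
    have hn₃ : 0 < n₃ := by
      rcases Nat.eq_zero_or_pos n₃ with rfl | h
      · simp at hprod; omega
      · exact h
    have he₁ : 0 < e₁ := Nat.pos_of_dvd_of_pos h11 hn₁
    have he₂ : 0 < e₂ := Nat.pos_of_dvd_of_pos h21 hn₃
    have hm₁pos : 0 < n₁ * n₂ / e₁ ^ 2 :=
      Nat.div_pos (Nat.le_of_dvd (Nat.mul_pos hn₁ hn₂)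
        (by rw [pow_two]; exact mul_dvd_mul h11 h12)) (pow_pos he₁ 2)
    exact ⟨hprod, he₁, he₂,
      Nat.pos_of_dvd_of_pos (hfg.trans (Nat.gcd_dvd_left _ _)) hm₁pos,
      h11, h12, h21, h22, hfg.trans (Nat.gcd_dvd_left _ _), hfg.trans (Nat.gcd_dvd_right _ _)⟩
  · rintro ⟨hprod, he₁, he₂, hf, h11, h12, h21, h22, hf1, hf2⟩
    have hd₁ : n₁ ∣ N := ⟨n₂ * n₃ * n₄, by rw [← hprod]; ring⟩
    have hd₂ : n₂ ∣ N := ⟨n₁ * n₃ * n₄, by rw [← hprod]; ring⟩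
    have hd₃ : n₃ ∣ N := ⟨n₁ * n₂ * n₄, by rw [← hprod]; ring⟩
    have hd₄ : n₄ ∣ N := ⟨n₁ * n₂ * n₃, by rw [← hprod]; ring⟩
    have hn₁ : 0 < n₁ := Nat.pos_of_dvd_of_pos hd₁ hN
    have hn₂ : 0 < n₂ := Nat.pos_of_dvd_of_pos hd₂ hN
    have hn₃ : 0 < n₃ := Nat.pos_of_dvd_of_pos hd₃ hN
    have hn₄ : 0 < n₄ := Nat.pos_of_dvd_of_pos hd₄ hN
    have hm₁dvd : n₁ * n₂ / e₁ ^ 2 ∣ n₁ * n₂ :=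
      Nat.div_dvd_of_dvd (by rw [pow_two]; exact mul_dvd_mul h11 h12)
    have hm₂dvd : n₃ * n₄ / e₂ ^ 2 ∣ n₃ * n₄ :=
      Nat.div_dvd_of_dvd (by rw [pow_two]; exact mul_dvd_mul h21 h22)
    have hm₁pos : 0 < n₁ * n₂ / e₁ ^ 2 :=
      Nat.div_pos (Nat.le_of_dvd (Nat.mul_pos hn₁ hn₂)
        (by rw [pow_two]; exact mul_dvd_mul h11 h12)) (pow_pos he₁ 2)
    have h12N : n₁ * n₂ ∣ N := ⟨n₃ * n₄, by rw [← hprod]; ring⟩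
    exact ⟨⟨⟨⟨⟨⟨⟨⟨⟨hn₁, Nat.le_of_dvd hN hd₁⟩, ⟨hn₂, Nat.le_of_dvd hN hd₂⟩,
      ⟨hn₃, Nat.le_of_dvd hN hd₃⟩, hn₄, Nat.le_of_dvd hN hd₄⟩, hprod⟩,
      h11.trans hd₁, hN0⟩, Nat.dvd_gcd h11 h12, (Nat.gcd_pos_of_pos_left _ hn₁).ne'⟩,
      h21.trans hd₃, hN0⟩, Nat.dvd_gcd h21 h22, (Nat.gcd_pos_of_pos_left _ hn₃).ne'⟩,
      hf1.trans (hm₁dvd.trans h12N), hN0⟩, Nat.dvd_gcd hf1 hf2,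
      (Nat.gcd_pos_of_pos_left _ hm₁pos).ne'⟩

lemma mem_V4 {N : ℕ} (hN : 0 < N) (j d m e₁ e₂ a b u₁ u₂ v₁ v₂ : ℕ) :
    (((((j, d, m), (e₁, e₂)), (a, b)), (u₁, u₂)), (v₁, v₂)) ∈ V4 N ↔
      j ^ 2 * d ^ 2 * m = N ∧ e₁ * e₂ = j ∧ a * b = m ∧ u₁ * u₂ = d * a ∧ v₁ * v₂ = d * b := by
  have hN0 : N ≠ 0 := hN.ne'
  simp only [V4, V3, V2, V1, RR, Finset.mem_filter, Finset.mem_product,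
    Nat.mem_divisors, Nat.mem_divisorsAntidiagonal]
  constructor
  · rintro ⟨⟨⟨⟨⟨⟨⟨⟨⟨-, hprod⟩, -⟩, hj, -⟩, -⟩, hm, -⟩, -⟩, hu, -⟩, -⟩, hv, -⟩
    exact ⟨hprod, hj, hm, hu, hv⟩
  · rintro ⟨hprod, hj, hm, hu, hv⟩
    have jdvd : j ∣ N := ⟨j * d ^ 2 * m, by rw [← hprod]; ring⟩
    have ddvd : d ∣ N := ⟨j ^ 2 * d * m, by rw [← hprod]; ring⟩
    have mdvd : m ∣ N := ⟨j ^ 2 * d ^ 2, by rw [← hprod]; ring⟩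
    have e₁N : e₁ ∣ N := (Dvd.intro e₂ hj).trans jdvd
    have e₂N : e₂ ∣ N := (Dvd.intro_left e₁ hj).trans jdvd
    have aN : a ∣ N := (Dvd.intro b hm).trans mdvd
    have bN : b ∣ N := (Dvd.intro_left a hm).trans mdvd
    have dadvd : d * a ∣ N := ⟨j ^ 2 * d * b, by rw [← hprod, ← hm]; ring⟩
    have dbdvd : d * b ∣ N := ⟨j ^ 2 * d * a, by rw [← hprod, ← hm]; ring⟩
    have u₁N : u₁ ∣ N := (Dvd.intro u₂ hu).trans dadvd
    have u₂N : u₂ ∣ N := (Dvd.intro_left u₁ hu).trans dadvd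
    have v₁N : v₁ ∣ N := (Dvd.intro v₂ hv).trans dbdvd
    have v₂N : v₂ ∣ N := (Dvd.intro_left v₁ hv).trans dbdvd
    exact ⟨⟨⟨⟨⟨⟨⟨⟨⟨⟨⟨jdvd, hN0⟩, ⟨ddvd, hN0⟩, mdvd, hN0⟩, hprod⟩, ⟨e₁N, hN0⟩, e₂N, hN0⟩,
      hj, (Nat.pos_of_dvd_of_pos jdvd hN).ne'⟩, ⟨aN, hN0⟩, bN, hN0⟩,
      hm, (Nat.pos_of_dvd_of_pos mdvd hN).ne'⟩, ⟨u₁N, hN0⟩, u₂N, hN0⟩,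
      hu, (Nat.pos_of_dvd_of_pos dadvd hN).ne'⟩, ⟨v₁N, hN0⟩, v₂N, hN0⟩,
      hv, (Nat.pos_of_dvd_of_pos dbdvd hN).ne'⟩

lemma middle (q N : ℕ) (hN : 0 < N) (χ : DirichletCharacter ℂ q) (lam : ℕ → ℂ) :
    ∑ w ∈ WW N, χ (w.1.1.2 : ZMod q) * χ (w.1.2 : ZMod q) * χ (w.2 : ZMod q) *
        lam (w.1.1.1.1 * w.1.1.1.2.1 / w.1.1.2 ^ 2 *
          (w.1.1.1.2.2.1 * w.1.1.1.2.2.2 / w.1.2 ^ 2) / w.2 ^ 2)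
      = ∑ z ∈ V4 N, χ (z.1.1.1.2.1 : ZMod q) * χ (z.1.1.1.2.2 : ZMod q) *
          χ (z.1.1.1.1.2.1 : ZMod q) * lam z.1.1.1.1.2.2 := by
  refine Finset.sum_nbij'
    (fun w => (((((w.1.1.2 * w.1.2, w.2,
        w.1.1.1.1 * w.1.1.1.2.1 / w.1.1.2 ^ 2 / w.2 *
          (w.1.1.1.2.2.1 * w.1.1.1.2.2.2 / w.1.2 ^ 2 / w.2)),
        (w.1.1.2, w.1.2)),
        (w.1.1.1.1 * w.1.1.1.2.1 / w.1.1.2 ^ 2 / w.2,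
         w.1.1.1.2.2.1 * w.1.1.1.2.2.2 / w.1.2 ^ 2 / w.2)),
        (w.1.1.1.1 / w.1.1.2, w.1.1.1.2.1 / w.1.1.2)),
        (w.1.1.1.2.2.1 / w.1.2, w.1.1.1.2.2.2 / w.1.2)))
    (fun z => ((((z.1.1.1.2.1 * z.1.2.1, z.1.1.1.2.1 * z.1.2.2,
        z.1.1.1.2.2 * z.2.1, z.1.1.1.2.2 * z.2.2),
        z.1.1.1.2.1), z.1.1.1.2.2), z.1.1.1.1.2.1))
    ?_ ?_ ?_ ?_ ?_
  · -- maps into V4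
    rintro ⟨⟨⟨⟨n₁, n₂, n₃, n₄⟩, e₁⟩, e₂⟩, f⟩ hw
    rw [mem_WW hN] at hw
    obtain ⟨hprod, he₁, he₂, hf, h11, h12, h21, h22, hf1, hf2⟩ := hw
    obtain ⟨u₁, rfl⟩ := h11
    obtain ⟨u₂, rfl⟩ := h12
    obtain ⟨v₁, rfl⟩ := h21
    obtain ⟨v₂, rfl⟩ := h22
    have hm₁ : e₁ * u₁ * (e₁ * u₂) / e₁ ^ 2 = u₁ * u₂ := by
      rw [show e₁ * u₁ * (e₁ * u₂) = e₁ ^ 2 * (u₁ * u₂) by ring,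
        Nat.mul_div_cancel_left _ (pow_pos he₁ 2)]
    have hm₂ : e₂ * v₁ * (e₂ * v₂) / e₂ ^ 2 = v₁ * v₂ := by
      rw [show e₂ * v₁ * (e₂ * v₂) = e₂ ^ 2 * (v₁ * v₂) by ring,
        Nat.mul_div_cancel_left _ (pow_pos he₂ 2)]
    rw [hm₁] at hf1
    rw [hm₂] at hf2
    obtain ⟨a, ha⟩ := hf1
    obtain ⟨b, hb⟩ := hf2
    dsimp only
    rw [mem_V4 hN, hm₁, hm₂, ha, hb, Nat.mul_div_cancel_left _ hf,
      Nat.mul_div_cancel_left _ hf, Nat.mul_div_cancel_left _ he₁,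
      Nat.mul_div_cancel_left _ he₁, Nat.mul_div_cancel_left _ he₂,
      Nat.mul_div_cancel_left _ he₂]
    refine ⟨?_, rfl, rfl, ha ▸ rfl, hb ▸ rfl⟩
    rw [← hprod]
    calc (e₁ * e₂) ^ 2 * f ^ 2 * (a * b) = e₁ ^ 2 * e₂ ^ 2 * ((f * a) * (f * b)) := by ring
      _ = e₁ ^ 2 * e₂ ^ 2 * ((u₁ * u₂) * (v₁ * v₂)) := by rw [← ha, ← hb]
      _ = e₁ * u₁ * (e₁ * u₂) * (e₂ * v₁) * (e₂ * v₂) := by ring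
  · -- maps into WW
    rintro ⟨⟨⟨⟨⟨j, d, m⟩, e₁, e₂⟩, a, b⟩, u₁, u₂⟩, v₁, v₂⟩ hz
    rw [mem_V4 hN] at hz
    obtain ⟨hprod, hj, hm, hu, hv⟩ := hz
    have he₁ : 0 < e₁ := by
      rcases Nat.eq_zero_or_pos e₁ with rfl | h
      · rw [← hj] at hprod; simp at hprod; omega
      · exact h
    have he₂ : 0 < e₂ := by
      rcases Nat.eq_zero_or_pos e₂ with rfl | h
      · rw [← hj] at hprod; simp at hprod; omega
      · exact h
    have hd : 0 < d := by
      rcases Nat.eq_zero_or_pos d with rfl | h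
      · simp at hprod; omega
      · exact h
    dsimp only
    rw [mem_WW hN]
    have hm₁ : e₁ * u₁ * (e₁ * u₂) / e₁ ^ 2 = u₁ * u₂ := by
      rw [show e₁ * u₁ * (e₁ * u₂) = e₁ ^ 2 * (u₁ * u₂) by ring,
        Nat.mul_div_cancel_left _ (pow_pos he₁ 2)]
    have hm₂ : e₂ * v₁ * (e₂ * v₂) / e₂ ^ 2 = v₁ * v₂ := by
      rw [show e₂ * v₁ * (e₂ * v₂) = e₂ ^ 2 * (v₁ * v₂) by ring,
        Nat.mul_div_cancel_left _ (pow_pos he₂ 2)]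
    refine ⟨?_, he₁, he₂, hd, dvd_mul_right _ _, dvd_mul_right _ _,
      dvd_mul_right _ _, dvd_mul_right _ _, ?_, ?_⟩
    · calc e₁ * u₁ * (e₁ * u₂) * (e₂ * v₁) * (e₂ * v₂)
          = e₁ ^ 2 * e₂ ^ 2 * ((u₁ * u₂) * (v₁ * v₂)) := by ring
        _ = e₁ ^ 2 * e₂ ^ 2 * ((d * a) * (d * b)) := by rw [hu, hv]
        _ = (e₁ * e₂) ^ 2 * d ^ 2 * (a * b) := by ring
        _ = N := by rw [hj, hm, hprod]
    · rw [hm₁, hu]; exact dvd_mul_right _ _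
    · rw [hm₂, hv]; exact dvd_mul_right _ _
  · -- left inverse
    rintro ⟨⟨⟨⟨n₁, n₂, n₃, n₄⟩, e₁⟩, e₂⟩, f⟩ hw
    rw [mem_WW hN] at hw
    obtain ⟨-, -, -, -, h11, h12, h21, h22, -, -⟩ := hw
    dsimp only
    rw [Nat.mul_div_cancel' h11, Nat.mul_div_cancel' h12,
      Nat.mul_div_cancel' h21, Nat.mul_div_cancel' h22]
  · -- right inverse
    rintro ⟨⟨⟨⟨⟨j, d, m⟩, e₁, e₂⟩, a, b⟩, u₁, u₂⟩, v₁, v₂⟩ hz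
    rw [mem_V4 hN] at hz
    obtain ⟨hprod, hj, hm, hu, hv⟩ := hz
    have he₁ : 0 < e₁ := by
      rcases Nat.eq_zero_or_pos e₁ with rfl | h
      · rw [← hj] at hprod; simp at hprod; omega
      · exact h
    have he₂ : 0 < e₂ := by
      rcases Nat.eq_zero_or_pos e₂ with rfl | h
      · rw [← hj] at hprod; simp at hprod; omega
      · exact h
    have hd : 0 < d := by
      rcases Nat.eq_zero_or_pos d with rfl | h
      · simp at hprod; omega
      · exact h
    dsimp only
    rw [show e₁ * u₁ * (e₁ * u₂) = e₁ ^ 2 * (u₁ * u₂) by ring,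
      show e₂ * v₁ * (e₂ * v₂) = e₂ ^ 2 * (v₁ * v₂) by ring,
      Nat.mul_div_cancel_left _ (pow_pos he₁ 2), Nat.mul_div_cancel_left _ (pow_pos he₂ 2),
      hu, hv, Nat.mul_div_cancel_left _ hd, Nat.mul_div_cancel_left _ hd,
      Nat.mul_div_cancel_left _ he₁, Nat.mul_div_cancel_left _ he₁,
      Nat.mul_div_cancel_left _ he₂, Nat.mul_div_cancel_left _ he₂,
      hj, hm]
  · -- summands agree
    rintro ⟨⟨⟨⟨n₁, n₂, n₃, n₄⟩, e₁⟩, e₂⟩, f⟩ hw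
    rw [mem_WW hN] at hw
    obtain ⟨-, -, -, -, -, -, -, -, hf1, hf2⟩ := hw
    dsimp only
    rw [Nat.div_mul_div_comm hf1 hf2, ← pow_two]

end HFS

set_option maxHeartbeats 2000000 in
open HFS in
/-- If `λ : ℕ₊ → ℂ` satisfies the Hecke relation with respect to a Dirichlet
character `χ` mod `q` (extended by zero), then for every positive integer `N`,
`∑_{n₁ n₂ n₃ n₄ = N} λ(n₁) λ(n₂) λ(n₃) λ(n₄)
  = ∑_{j² d² m = N} χ(j) τ(j) χ(d) λ(m) ∑_{m₁ m₂ = m} τ(d m₁) τ(d m₂)`. -/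
theorem hecke_fourth_sum (q : ℕ) (hq : 0 < q) (χ : DirichletCharacter ℂ q) (lam : ℕ → ℂ)
    (hHecke : ∀ m n : ℕ, 0 < m → 0 < n →
      lam m * lam n = ∑ d ∈ (Nat.gcd m n).divisors, χ (d : ZMod q) * lam (m * n / d ^ 2))
    (N : ℕ) (hN : 0 < N) :
    ∑ p ∈ (Finset.Icc 1 N ×ˢ Finset.Icc 1 N ×ˢ Finset.Icc 1 N ×ˢ Finset.Icc 1 N).filter
        (fun p => p.1 * p.2.1 * p.2.2.1 * p.2.2.2 = N),
      lam p.1 * lam p.2.1 * lam p.2.2.1 * lam p.2.2.2 =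
    ∑ p ∈ (N.divisors ×ˢ N.divisors ×ˢ N.divisors).filter
        (fun p => p.1 ^ 2 * p.2.1 ^ 2 * p.2.2 = N),
      χ (p.1 : ZMod q) * (p.1.divisors.card : ℂ) * χ (p.2.1 : ZMod q) * lam p.2.2 *
        (∑ m ∈ p.2.2.divisorsAntidiagonal,
          ((p.2.1 * m.1).divisors.card : ℂ) * ((p.2.1 * m.2).divisors.card : ℂ)) := by
  have hN0 : N ≠ 0 := hN.ne'
  -- LHS per-element expansion
  have hexp : ∀ p ∈ QQ N, lam p.1 * lam p.2.1 * lam p.2.2.1 * lam p.2.2.2 =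
      ∑ e₁ ∈ (Nat.gcd p.1 p.2.1).divisors, ∑ e₂ ∈ (Nat.gcd p.2.2.1 p.2.2.2).divisors,
        ∑ f ∈ (Nat.gcd (p.1 * p.2.1 / e₁ ^ 2) (p.2.2.1 * p.2.2.2 / e₂ ^ 2)).divisors,
          χ (e₁ : ZMod q) * χ (e₂ : ZMod q) * χ (f : ZMod q) *
            lam (p.1 * p.2.1 / e₁ ^ 2 * (p.2.2.1 * p.2.2.2 / e₂ ^ 2) / f ^ 2) := by
    intro p hp
    simp only [QQ, Finset.mem_filter, Finset.mem_product, Finset.mem_Icc] at hp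
    obtain ⟨⟨⟨h1a, h1b⟩, ⟨h2a, h2b⟩, ⟨h3a, h3b⟩, h4a, h4b⟩, hprod⟩ := hp
    rw [show lam p.1 * lam p.2.1 * lam p.2.2.1 * lam p.2.2.2
        = lam p.1 * lam p.2.1 * (lam p.2.2.1 * lam p.2.2.2) by ring,
      hHecke p.1 p.2.1 h1a h2a, hHecke p.2.2.1 p.2.2.2 h3a h4a, Finset.sum_mul_sum]
    refine Finset.sum_congr rfl fun e₁ he₁ => Finset.sum_congr rfl fun e₂ he₂ => ?_
    have h11 : e₁ ∣ p.1 := (Nat.mem_divisors.mp he₁).1.trans (Nat.gcd_dvd_left _ _)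
    have h12 : e₁ ∣ p.2.1 := (Nat.mem_divisors.mp he₁).1.trans (Nat.gcd_dvd_right _ _)
    have h21 : e₂ ∣ p.2.2.1 := (Nat.mem_divisors.mp he₂).1.trans (Nat.gcd_dvd_left _ _)
    have h22 : e₂ ∣ p.2.2.2 := (Nat.mem_divisors.mp he₂).1.trans (Nat.gcd_dvd_right _ _)
    have he₁0 : 0 < e₁ := Nat.pos_of_dvd_of_pos h11 h1a
    have he₂0 : 0 < e₂ := Nat.pos_of_dvd_of_pos h21 h3a
    have hm₁ : 0 < p.1 * p.2.1 / e₁ ^ 2 :=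
      Nat.div_pos (Nat.le_of_dvd (Nat.mul_pos h1a h2a)
        (by rw [pow_two]; exact mul_dvd_mul h11 h12)) (pow_pos he₁0 2)
    have hm₂ : 0 < p.2.2.1 * p.2.2.2 / e₂ ^ 2 :=
      Nat.div_pos (Nat.le_of_dvd (Nat.mul_pos h3a h4a)
        (by rw [pow_two]; exact mul_dvd_mul h21 h22)) (pow_pos he₂0 2)
    rw [show χ (e₁ : ZMod q) * lam (p.1 * p.2.1 / e₁ ^ 2) *
          (χ (e₂ : ZMod q) * lam (p.2.2.1 * p.2.2.2 / e₂ ^ 2))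
        = χ (e₁ : ZMod q) * χ (e₂ : ZMod q) *
          (lam (p.1 * p.2.1 / e₁ ^ 2) * lam (p.2.2.1 * p.2.2.2 / e₂ ^ 2)) by ring,
      hHecke _ _ hm₁ hm₂, Finset.mul_sum]
    exact Finset.sum_congr rfl fun f hf => by ring
  -- RHS per-element expansion
  have hrexp : ∀ p ∈ RR N,
      χ (p.1 : ZMod q) * (p.1.divisors.card : ℂ) * χ (p.2.1 : ZMod q) * lam p.2.2 *
        (∑ m ∈ p.2.2.divisorsAntidiagonal,
          ((p.2.1 * m.1).divisors.card : ℂ) * ((p.2.1 * m.2).divisors.card : ℂ))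
      = ∑ ee ∈ p.1.divisorsAntidiagonal, ∑ ab ∈ p.2.2.divisorsAntidiagonal,
          ∑ uu ∈ (p.2.1 * ab.1).divisorsAntidiagonal,
            ∑ vv ∈ (p.2.1 * ab.2).divisorsAntidiagonal,
              χ (ee.1 : ZMod q) * χ (ee.2 : ZMod q) * χ (p.2.1 : ZMod q) * lam p.2.2 := by
    intro p hp
    have h1 : ∑ ee ∈ p.1.divisorsAntidiagonal, (χ (ee.1 : ZMod q) * χ (ee.2 : ZMod q) : ℂ)
        = χ (p.1 : ZMod q) * (p.1.divisors.card : ℂ) := by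
      calc ∑ ee ∈ p.1.divisorsAntidiagonal, (χ (ee.1 : ZMod q) * χ (ee.2 : ZMod q) : ℂ)
          = ∑ ee ∈ p.1.divisorsAntidiagonal, χ (p.1 : ZMod q) := by
            refine Finset.sum_congr rfl fun ee hee => ?_
            obtain ⟨h, -⟩ := Nat.mem_divisorsAntidiagonal.mp hee
            rw [← h]; push_cast; rw [map_mul]
        _ = _ := by rw [Finset.sum_const, card_dA, nsmul_eq_mul]; ring
    calc χ (p.1 : ZMod q) * (p.1.divisors.card : ℂ) * χ (p.2.1 : ZMod q) * lam p.2.2 *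
        (∑ m ∈ p.2.2.divisorsAntidiagonal,
          ((p.2.1 * m.1).divisors.card : ℂ) * ((p.2.1 * m.2).divisors.card : ℂ))
        = (∑ ee ∈ p.1.divisorsAntidiagonal, (χ (ee.1 : ZMod q) * χ (ee.2 : ZMod q) : ℂ)) *
            (χ (p.2.1 : ZMod q) * lam p.2.2 *
              ∑ ab ∈ p.2.2.divisorsAntidiagonal,
                ((p.2.1 * ab.1).divisors.card : ℂ) * ((p.2.1 * ab.2).divisors.card : ℂ)) := by
          rw [h1]; ring
      _ = ∑ ee ∈ p.1.divisorsAntidiagonal, χ (ee.1 : ZMod q) * χ (ee.2 : ZMod q) *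
            (χ (p.2.1 : ZMod q) * lam p.2.2 *
              ∑ ab ∈ p.2.2.divisorsAntidiagonal,
                ((p.2.1 * ab.1).divisors.card : ℂ) * ((p.2.1 * ab.2).divisors.card : ℂ)) := by
          rw [Finset.sum_mul]
      _ = _ := by
          refine Finset.sum_congr rfl fun ee _ => ?_
          rw [Finset.mul_sum, Finset.mul_sum]
          refine Finset.sum_congr rfl fun ab _ => ?_
          simp only [Finset.sum_const, nsmul_eq_mul, card_dA]
          ring
  -- subset facts for flattening
  have subQ : ∀ p ∈ QQ N, (Nat.gcd p.1 p.2.1).divisors ⊆ N.divisors := by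
    intro p hp
    simp only [QQ, Finset.mem_filter] at hp
    exact Nat.divisors_subset_of_dvd hN0 ((Nat.gcd_dvd_left _ _).trans
      ⟨p.2.1 * p.2.2.1 * p.2.2.2, by rw [← hp.2]; ring⟩)
  have subS1 : ∀ x ∈ S1 N, (Nat.gcd x.1.2.2.1 x.1.2.2.2).divisors ⊆ N.divisors := by
    intro x hx
    have hp := (Finset.mem_product.mp (Finset.mem_filter.mp hx).1).1
    simp only [QQ, Finset.mem_filter] at hp
    exact Nat.divisors_subset_of_dvd hN0 ((Nat.gcd_dvd_left _ _).trans
      ⟨x.1.1 * x.1.2.1 * x.1.2.2.2, by rw [← hp.2]; ring⟩)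
  have subS2 : ∀ y ∈ S2 N,
      (Nat.gcd (y.1.1.1 * y.1.1.2.1 / y.1.2 ^ 2)
        (y.1.1.2.2.1 * y.1.1.2.2.2 / y.2 ^ 2)).divisors ⊆ N.divisors := by
    intro y hy
    simp only [S2, S1, QQ, Finset.mem_filter, Finset.mem_product, Finset.mem_Icc,
      Nat.mem_divisors] at hy
    obtain ⟨⟨⟨⟨⟨-, hprod⟩, -⟩, he₁g, -⟩, -⟩, -⟩ := hy
    have h11 : y.1.2 ∣ y.1.1.1 := he₁g.trans (Nat.gcd_dvd_left _ _)
    have h12 : y.1.2 ∣ y.1.1.2.1 := he₁g.trans (Nat.gcd_dvd_right _ _)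
    have hm₁dvd : y.1.1.1 * y.1.1.2.1 / y.1.2 ^ 2 ∣ y.1.1.1 * y.1.1.2.1 :=
      Nat.div_dvd_of_dvd (by rw [pow_two]; exact mul_dvd_mul h11 h12)
    exact Nat.divisors_subset_of_dvd hN0 ((Nat.gcd_dvd_left _ _).trans (hm₁dvd.trans
      ⟨y.1.1.2.2.1 * y.1.1.2.2.2, by rw [← hprod]; ring⟩))
  have hdA : ∀ k : ℕ, k ∣ N → k.divisorsAntidiagonal ⊆ N.divisors ×ˢ N.divisors := by
    intro k hk x hx
    rw [Finset.mem_product]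
    exact ⟨Nat.divisors_subset_of_dvd hN0 hk (Nat.fst_mem_divisors_of_mem_antidiagonal hx),
      Nat.divisors_subset_of_dvd hN0 hk (Nat.snd_mem_divisors_of_mem_antidiagonal hx)⟩
  have subR : ∀ p ∈ RR N, p.1.divisorsAntidiagonal ⊆ N.divisors ×ˢ N.divisors := by
    intro p hp
    exact hdA _ (Nat.dvd_of_mem_divisors
      (Finset.mem_product.mp (Finset.mem_filter.mp hp).1).1)
  have subV1 : ∀ x ∈ V1 N, x.1.2.2.divisorsAntidiagonal ⊆ N.divisors ×ˢ N.divisors := by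
    intro x hx
    have hp := (Finset.mem_product.mp (Finset.mem_filter.mp hx).1).1
    simp only [RR, Finset.mem_filter, Finset.mem_product, Nat.mem_divisors] at hp
    exact hdA _ hp.1.2.2.1
  have subV2 : ∀ x ∈ V2 N,
      (x.1.1.2.1 * x.2.1).divisorsAntidiagonal ⊆ N.divisors ×ˢ N.divisors := by
    intro x hx
    simp only [V2, V1, RR, Finset.mem_filter, Finset.mem_product, Nat.mem_divisors,
      Nat.mem_divisorsAntidiagonal] at hx
    obtain ⟨⟨⟨⟨⟨-, hprod⟩, -⟩, -⟩, -⟩, hab, -⟩ := hx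
    exact hdA _ ⟨x.1.1.1 ^ 2 * x.1.1.2.1 * x.2.2, by rw [← hprod, ← hab]; ring⟩
  have subV3 : ∀ x ∈ V3 N,
      (x.1.1.1.2.1 * x.1.2.2).divisorsAntidiagonal ⊆ N.divisors ×ˢ N.divisors := by
    intro x hx
    simp only [V3, V2, V1, RR, Finset.mem_filter, Finset.mem_product, Nat.mem_divisors,
      Nat.mem_divisorsAntidiagonal] at hx
    obtain ⟨⟨⟨⟨⟨⟨⟨-, hprod⟩, -⟩, -⟩, -⟩, hab, -⟩, -⟩, -⟩ := hx
    exact hdA _ ⟨x.1.1.1.1 ^ 2 * x.1.1.1.2.1 * x.1.2.1, by rw [← hprod, ← hab]; ring⟩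
  calc ∑ p ∈ (Finset.Icc 1 N ×ˢ Finset.Icc 1 N ×ˢ Finset.Icc 1 N ×ˢ Finset.Icc 1 N).filter
        (fun p => p.1 * p.2.1 * p.2.2.1 * p.2.2.2 = N),
      lam p.1 * lam p.2.1 * lam p.2.2.1 * lam p.2.2.2
      = ∑ p ∈ QQ N, ∑ e₁ ∈ (Nat.gcd p.1 p.2.1).divisors,
          ∑ e₂ ∈ (Nat.gcd p.2.2.1 p.2.2.2).divisors,
            ∑ f ∈ (Nat.gcd (p.1 * p.2.1 / e₁ ^ 2) (p.2.2.1 * p.2.2.2 / e₂ ^ 2)).divisors,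
              χ (e₁ : ZMod q) * χ (e₂ : ZMod q) * χ (f : ZMod q) *
                lam (p.1 * p.2.1 / e₁ ^ 2 * (p.2.2.1 * p.2.2.2 / e₂ ^ 2) / f ^ 2) :=
        Finset.sum_congr rfl hexp
    _ = ∑ x ∈ S1 N, ∑ e₂ ∈ (Nat.gcd x.1.2.2.1 x.1.2.2.2).divisors,
          ∑ f ∈ (Nat.gcd (x.1.1 * x.1.2.1 / x.2 ^ 2) (x.1.2.2.1 * x.1.2.2.2 / e₂ ^ 2)).divisors,
            χ (x.2 : ZMod q) * χ (e₂ : ZMod q) * χ (f : ZMod q) *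
              lam (x.1.1 * x.1.2.1 / x.2 ^ 2 * (x.1.2.2.1 * x.1.2.2.2 / e₂ ^ 2) / f ^ 2) :=
        flatten_sum _ _ _ subQ _
    _ = ∑ y ∈ S2 N,
          ∑ f ∈ (Nat.gcd (y.1.1.1 * y.1.1.2.1 / y.1.2 ^ 2)
              (y.1.1.2.2.1 * y.1.1.2.2.2 / y.2 ^ 2)).divisors,
            χ (y.1.2 : ZMod q) * χ (y.2 : ZMod q) * χ (f : ZMod q) *
              lam (y.1.1.1 * y.1.1.2.1 / y.1.2 ^ 2 *
                (y.1.1.2.2.1 * y.1.1.2.2.2 / y.2 ^ 2) / f ^ 2) :=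
        flatten_sum _ _ _ subS1 _
    _ = ∑ w ∈ WW N, χ (w.1.1.2 : ZMod q) * χ (w.1.2 : ZMod q) * χ (w.2 : ZMod q) *
          lam (w.1.1.1.1 * w.1.1.1.2.1 / w.1.1.2 ^ 2 *
            (w.1.1.1.2.2.1 * w.1.1.1.2.2.2 / w.1.2 ^ 2) / w.2 ^ 2) :=
        flatten_sum _ _ _ subS2 _
    _ = ∑ z ∈ V4 N, χ (z.1.1.1.2.1 : ZMod q) * χ (z.1.1.1.2.2 : ZMod q) *
          χ (z.1.1.1.1.2.1 : ZMod q) * lam z.1.1.1.1.2.2 := middle q N hN χ lam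
    _ = ∑ x ∈ V3 N, ∑ vv ∈ (x.1.1.1.2.1 * x.1.2.2).divisorsAntidiagonal,
          χ (x.1.1.2.1 : ZMod q) * χ (x.1.1.2.2 : ZMod q) *
            χ (x.1.1.1.2.1 : ZMod q) * lam x.1.1.1.2.2 :=
        (flatten_sum _ _ _ subV3 (fun x _ => χ (x.1.1.2.1 : ZMod q) * χ (x.1.1.2.2 : ZMod q) *
          χ (x.1.1.1.2.1 : ZMod q) * lam x.1.1.1.2.2)).symm
    _ = ∑ x ∈ V2 N, ∑ uu ∈ (x.1.1.2.1 * x.2.1).divisorsAntidiagonal,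
          ∑ vv ∈ (x.1.1.2.1 * x.2.2).divisorsAntidiagonal,
            χ (x.1.2.1 : ZMod q) * χ (x.1.2.2 : ZMod q) *
              χ (x.1.1.2.1 : ZMod q) * lam x.1.1.2.2 :=
        (flatten_sum _ _ _ subV2 (fun x _ =>
          ∑ vv ∈ (x.1.1.2.1 * x.2.2).divisorsAntidiagonal,
            χ (x.1.2.1 : ZMod q) * χ (x.1.2.2 : ZMod q) *
              χ (x.1.1.2.1 : ZMod q) * lam x.1.1.2.2)).symm
    _ = ∑ x ∈ V1 N, ∑ ab ∈ x.1.2.2.divisorsAntidiagonal,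
          ∑ uu ∈ (x.1.2.1 * ab.1).divisorsAntidiagonal,
            ∑ vv ∈ (x.1.2.1 * ab.2).divisorsAntidiagonal,
              χ (x.2.1 : ZMod q) * χ (x.2.2 : ZMod q) *
                χ (x.1.2.1 : ZMod q) * lam x.1.2.2 :=
        (flatten_sum _ _ _ subV1 (fun x ab =>
          ∑ uu ∈ (x.1.2.1 * ab.1).divisorsAntidiagonal,
            ∑ vv ∈ (x.1.2.1 * ab.2).divisorsAntidiagonal,
              χ (x.2.1 : ZMod q) * χ (x.2.2 : ZMod q) *
                χ (x.1.2.1 : ZMod q) * lam x.1.2.2)).symm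
    _ = ∑ p ∈ RR N, ∑ ee ∈ p.1.divisorsAntidiagonal, ∑ ab ∈ p.2.2.divisorsAntidiagonal,
          ∑ uu ∈ (p.2.1 * ab.1).divisorsAntidiagonal,
            ∑ vv ∈ (p.2.1 * ab.2).divisorsAntidiagonal,
              χ (ee.1 : ZMod q) * χ (ee.2 : ZMod q) * χ (p.2.1 : ZMod q) * lam p.2.2 :=
        (flatten_sum _ _ _ subR (fun p ee =>
          ∑ ab ∈ p.2.2.divisorsAntidiagonal,
            ∑ uu ∈ (p.2.1 * ab.1).divisorsAntidiagonal,
              ∑ vv ∈ (p.2.1 * ab.2).divisorsAntidiagonal,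
                χ (ee.1 : ZMod q) * χ (ee.2 : ZMod q) *
                  χ (p.2.1 : ZMod q) * lam p.2.2)).symm
    _ = _ := (Finset.sum_congr rfl hrexp).symm
end

section
/- Let q be a positive integer, χ a Dirichlet character modulo q (extended by zero to integers not coprime to q), and λ: ℕ₊ → ℂ a function satisfying the Hecke relation λ(m)λ(n) = Σ_{d | gcd(m,n)} χ(d) λ(mn/d²) for all positive integers m, n. Then for every positive integer N, Σ_{(n₁,n₂,n₃,n₄): n₁n₂n₃n₄ = N} λ(n₁)λ(n₂)λ(n₃)λ(n₄) = Σ_{(b,c,d,j,n): bc·lcm(b,c)²·d²·j²·n = N} χ(j·lcm(b,c)·d) · μ(b)μ(c) τ(d·lcm(b,c)/b) τ(d·lcm(b,c)/c) τ(j) · λ(bcn) σ₄(n), where all sums are over ordered tuples of positive integers with the indicated product constraints. -/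
/-!
In the Dirichlet ring of arithmetic functions the left-hand side is `((λ * λ) * (λ * λ)) N`.
The Hecke relation gives `λ * λ = S * τλ`, where `S = squareChar χ` is `χ(√n)` on perfect
squares and `0` elsewhere and `τλ` is the pointwise product; hence the sum is
`((S * S) * (τλ * τλ)) N`, and `(S * S)(j²) = χ(j) τ(j)`. A second use of the Hecke relation
gives `(τλ * τλ)(M) = ∑_{f² x y = M} χ(f) τ(f x) τ(f y) λ(x y)`. Expanding
`τ(f x) = ∑_{b ∣ (f, x)} μ(b) τ(f / b) τ(x / b)` and substituting `f = [b, c] d`, `x = b x'`,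
`y = c y'` collects `τ(x') τ(y')` over `x' y' = n` into `σ₄(n) = (τ * τ)(n)`.
-/

open Finset ArithmeticFunction

/-- `sigma4 n` is the number of ordered quadruples of positive integers whose
product is `n` (the 4-fold divisor function `σ₄`). -/
def sigma4 (n : ℕ) : ℕ :=
  ((Finset.Icc 1 n ×ˢ Finset.Icc 1 n ×ˢ Finset.Icc 1 n ×ˢ Finset.Icc 1 n).filter
    (fun p => p.1 * p.2.1 * p.2.2.1 * p.2.2.2 = n)).card

open scoped ArithmeticFunction.Moebius ArithmeticFunction.sigma ArithmeticFunction.zeta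

namespace Nat

theorem card_divisorsAntidiagonal (n : ℕ) : #n.divisorsAntidiagonal = #n.divisors := by
  rw [← map_div_right_divisors, card_map]

theorem mem_Icc_one_of_dvd {a N : ℕ} (h : a ∣ N) (hN : N ≠ 0) : a ∈ Icc 1 N :=
  mem_Icc.2 ⟨pos_of_dvd_of_pos h (pos_of_ne_zero hN), le_of_dvd (pos_of_ne_zero hN) h⟩

theorem mul_mul_mul_div_sq {f : ℕ} (x y : ℕ) (hf : f ≠ 0) : f * x * (f * y) / f ^ 2 = x * y := by
  rw [show f * x * (f * y) = f ^ 2 * (x * y) by ring, Nat.mul_div_cancel_left _ (by positivity)]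

theorem card_divisors_mul_eq_card_filter_coprime (m n : ℕ) :
    #(m * n).divisors = #{p ∈ m.divisors ×ˢ n.divisors | Coprime (m / p.1) p.2} := by
  refine (card_nbij' (fun p => p.1 * p.2) (fun d => (d.gcd m, d / d.gcd m)) ?_ ?_ ?_ ?_).symm
  · rintro ⟨u, v⟩ hp
    simp only [coe_filter, mem_product, mem_divisors, Set.mem_ofPred_eq] at hp
    obtain ⟨⟨⟨hu, hm⟩, hv, hn⟩, -⟩ := hp
    simpa using ⟨mul_dvd_mul hu hv, hm, hn⟩
  · intro d hd
    simp only [coe_filter, mem_product, mem_divisors, Set.mem_ofPred_eq, mem_coe] at hd ⊢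
    obtain ⟨hd, hmn⟩ := hd
    have hg : 0 < d.gcd m := gcd_pos_of_pos_right d (pos_of_ne_zero (left_ne_zero_of_mul hmn))
    have hcop : Coprime (d / d.gcd m) (m / d.gcd m) := coprime_div_gcd_div_gcd hg
    refine ⟨⟨⟨gcd_dvd_right d m, left_ne_zero_of_mul hmn⟩, ?_, right_ne_zero_of_mul hmn⟩, hcop.symm⟩
    refine hcop.dvd_of_dvd_mul_left ((Nat.div_dvd_iff_dvd_mul (gcd_dvd_left d m) hg).2 ?_)
    rwa [← mul_assoc, Nat.mul_div_cancel' (gcd_dvd_right d m)]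
  · rintro ⟨u, v⟩ hp
    simp only [coe_filter, mem_product, mem_divisors, Set.mem_ofPred_eq] at hp
    obtain ⟨⟨⟨hu, hm⟩, -⟩, hcop⟩ := hp
    have hgcd : (u * v).gcd m = u := by
      rw [← Nat.mul_div_cancel' hu, gcd_mul_left, gcd_comm, hcop, mul_one]
    simp [hgcd, Nat.mul_div_cancel_left v (pos_of_dvd_of_pos hu (pos_of_ne_zero hm))]
  · intro d _
    exact Nat.mul_div_cancel' (gcd_dvd_left d m)

theorem sum_divisors_gcd_sum_divisors_div {R : Type*} [AddCommMonoid R] (m n : ℕ) (F : ℕ → R) :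
    ∑ b ∈ (m.gcd n).divisors, ∑ _p ∈ (m / b).divisors ×ˢ (n / b).divisors, F b =
      ∑ p ∈ m.divisors ×ˢ n.divisors, ∑ b ∈ ((m / p.1).gcd p.2).divisors, F b := by
  rw [sum_sigma', sum_sigma']
  refine sum_nbij' (fun s => ⟨(s.2.1, s.1 * s.2.2), s.1⟩) (fun t => ⟨t.2, (t.1.1, t.1.2 / t.2)⟩)
    ?_ ?_ ?_ ?_ (fun _ _ => rfl)
  · rintro ⟨b, u, w⟩ hs
    simp only [mem_sigma, mem_product, mem_divisors] at hs ⊢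
    obtain ⟨⟨hb, -⟩, ⟨hu, hmb⟩, ⟨hw, hnb⟩⟩ := hs
    have hbm : b ∣ m := hb.trans (gcd_dvd_left m n)
    have hbn : b ∣ n := hb.trans (gcd_dvd_right m n)
    have hn := ((div_ne_zero_iff_of_dvd hbn).1 hnb).1
    have hbw : b * w ∣ n := mul_dvd_of_dvd_div hbn hw
    refine ⟨⟨⟨hu.trans (div_dvd_of_dvd hbm), ((div_ne_zero_iff_of_dvd hbm).1 hmb).1⟩, hbw, hn⟩,
      dvd_gcd (dvd_div_of_mul_dvd ?_) (dvd_mul_right b w),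
      gcd_ne_zero_right (ne_zero_of_dvd_ne_zero hn hbw)⟩
    rw [mul_comm]
    exact mul_dvd_of_dvd_div hbm hu
  · rintro ⟨⟨u, v⟩, b⟩ ht
    simp only [mem_sigma, mem_product, mem_divisors] at ht ⊢
    obtain ⟨⟨⟨hu, hm⟩, hv, hn⟩, hb, hg⟩ := ht
    have hbmu : b ∣ m / u := hb.trans (gcd_dvd_left _ _)
    have hbv : b ∣ v := hb.trans (gcd_dvd_right _ _)
    have hbm : b ∣ m := hbmu.trans (div_dvd_of_dvd hu)
    have hb0 : b ≠ 0 := ne_zero_of_dvd_ne_zero hg hb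
    refine ⟨⟨dvd_gcd hbm (hbv.trans hv), gcd_ne_zero_left hm⟩,
      ⟨dvd_div_of_mul_dvd ?_, (div_ne_zero_iff_of_dvd hbm).2 ⟨hm, hb0⟩⟩,
      div_dvd_div hbv hv, (div_ne_zero_iff_of_dvd (hbv.trans hv)).2 ⟨hn, hb0⟩⟩
    rw [mul_comm]
    exact mul_dvd_of_dvd_div hu hbmu
  · rintro ⟨b, u, w⟩ hs
    simp only [mem_sigma, mem_divisors] at hs
    simp [Nat.mul_div_cancel_left w (pos_of_ne_zero (ne_zero_of_dvd_ne_zero hs.1.2 hs.1.1))]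
  · rintro ⟨⟨u, v⟩, b⟩ ht
    simp only [mem_sigma, mem_divisors] at ht
    simp [Nat.mul_div_cancel' (ht.2.1.trans (gcd_dvd_right _ _))]

theorem sum_divisorsAntidiagonal_sum_gcd_eq_sum_sq {R : Type*} [AddCommMonoid R] (M : ℕ)
    (W : ℕ → ℕ → ℕ → R) :
    ∑ p ∈ M.divisorsAntidiagonal, ∑ f ∈ (p.1.gcd p.2).divisors, W f p.1 p.2 =
      ∑ p ∈ M.divisorsAntidiagonal, ∑ f ∈ p.1.divisors with f * f = p.1,
        ∑ x ∈ p.2.divisorsAntidiagonal, W f (f * x.1) (f * x.2) := by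
  simp only [sum_sigma']
  symm
  refine sum_bij (fun s _ => ⟨(s.2.1 * s.2.2.1, s.2.1 * s.2.2.2), s.2.1⟩) ?_ ?_ ?_
    (fun _ _ => rfl)
  · rintro ⟨⟨A, K⟩, f, x, y⟩ hs
    simp only [mem_sigma, mem_divisorsAntidiagonal, mem_filter, mem_divisors] at hs ⊢
    obtain ⟨⟨rfl, hM⟩, ⟨-, rfl⟩, rfl, -⟩ := hs
    refine ⟨⟨by ring, hM⟩, dvd_gcd (dvd_mul_right f x) (dvd_mul_right f y), gcd_ne_zero_left ?_⟩
    simp only [ne_eq, mul_eq_zero, not_or] at hM ⊢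
    exact ⟨hM.1.1, hM.2.1⟩
  · rintro ⟨⟨A, K⟩, f, x, y⟩ hs ⟨⟨A', K'⟩, f', x', y'⟩ hs' he
    simp only [mem_sigma, mem_divisorsAntidiagonal, mem_filter, mem_divisors] at hs hs'
    simp only [Sigma.mk.inj_iff, Prod.mk.injEq, heq_eq_eq] at he
    obtain ⟨⟨hx, hy⟩, rfl⟩ := he
    obtain ⟨-, ⟨⟨-, hA⟩, rfl⟩, rfl, -⟩ := hs
    obtain ⟨-, ⟨-, rfl⟩, rfl, -⟩ := hs'
    have hf := pos_of_ne_zero (left_ne_zero_of_mul hA)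
    obtain rfl := Nat.eq_of_mul_eq_mul_left hf hx
    obtain rfl := Nat.eq_of_mul_eq_mul_left hf hy
    rfl
  · rintro ⟨⟨m, n⟩, f⟩ hs
    simp only [mem_sigma, mem_divisorsAntidiagonal, mem_divisors] at hs
    obtain ⟨⟨rfl, hM⟩, hf, -⟩ := hs
    obtain ⟨x, rfl⟩ := hf.trans (gcd_dvd_left _ _)
    obtain ⟨y, rfl⟩ := hf.trans (gcd_dvd_right _ _)
    refine ⟨⟨(f * f, x * y), f, (x, y)⟩, ?_, rfl⟩
    simp only [mem_sigma, mem_divisorsAntidiagonal, mem_filter, mem_divisors]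
    simp only [ne_eq, mul_eq_zero, not_or] at hM
    exact ⟨⟨by ring, by simp [hM]⟩, ⟨⟨dvd_mul_right f f, by simp [hM]⟩, trivial⟩, trivial,
      by simp [hM]⟩

theorem mem_filter_lcm_sq_mul_eq {M b c d n : ℕ} :
    (b, c, d, n) ∈ (M.divisors ×ˢ M.divisors ×ˢ M.divisors ×ˢ M.divisors).filter
        (fun t => t.1 * t.2.1 * lcm t.1 t.2.1 ^ 2 * t.2.2.1 ^ 2 * t.2.2.2 = M) ↔
      b * c * lcm b c ^ 2 * d ^ 2 * n = M ∧ M ≠ 0 := by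
  simp only [mem_filter, mem_product, mem_divisors]
  refine ⟨fun h => ⟨h.2, h.1.1.2⟩, ?_⟩
  rintro ⟨rfl, hM⟩
  refine ⟨⟨⟨?_, hM⟩, ⟨?_, hM⟩, ⟨?_, hM⟩, ⟨?_, hM⟩⟩, rfl⟩ <;>
    simp (maxDischargeDepth := 5) [Dvd.dvd.mul_left, Dvd.dvd.mul_right]

theorem sum_sq_mul_sum_gcd_eq_sum_lcm {R : Type*} [AddCommMonoid R] (M : ℕ)
    (W : ℕ → ℕ → ℕ → ℕ → ℕ → R) :
    ∑ p ∈ M.divisorsAntidiagonal, ∑ f ∈ p.1.divisors with f * f = p.1,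
      ∑ x ∈ p.2.divisorsAntidiagonal, ∑ bc ∈ (f.gcd x.1).divisors ×ˢ (f.gcd x.2).divisors,
        W bc.1 bc.2 f x.1 x.2 =
    ∑ t ∈ (M.divisors ×ˢ M.divisors ×ˢ M.divisors ×ˢ M.divisors).filter
        (fun t => t.1 * t.2.1 * lcm t.1 t.2.1 ^ 2 * t.2.2.1 ^ 2 * t.2.2.2 = M),
      ∑ y ∈ t.2.2.2.divisorsAntidiagonal,
        W t.1 t.2.1 (lcm t.1 t.2.1 * t.2.2.1) (t.1 * y.1) (t.2.1 * y.2) := by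
  simp only [sum_sigma']
  symm
  refine sum_bij (fun t _ => ⟨(lcm t.1.1 t.1.2.1 * t.1.2.2.1 * (lcm t.1.1 t.1.2.1 * t.1.2.2.1),
      t.1.1 * t.2.1 * (t.1.2.1 * t.2.2)), lcm t.1.1 t.1.2.1 * t.1.2.2.1,
      (t.1.1 * t.2.1, t.1.2.1 * t.2.2), (t.1.1, t.1.2.1)⟩) ?_ ?_ ?_ (fun _ _ => rfl)
  · rintro ⟨⟨b, c, d, n⟩, ⟨x, y⟩⟩ ht
    simp only [mem_sigma, mem_filter_lcm_sq_mul_eq, mem_divisorsAntidiagonal] at ht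
    simp only [mem_sigma, mem_divisorsAntidiagonal, mem_filter, mem_product, mem_divisors]
    obtain ⟨⟨rfl, hM⟩, rfl, -⟩ := ht
    refine ⟨⟨by ring, hM⟩, ⟨⟨dvd_mul_right _ _, ?_⟩, trivial⟩, ⟨trivial, ?_⟩,
      ⟨dvd_gcd ((dvd_lcm_left b c).mul_right d) (dvd_mul_right b x), gcd_ne_zero_right ?_⟩,
      dvd_gcd ((dvd_lcm_right b c).mul_right d) (dvd_mul_right c y), gcd_ne_zero_right ?_⟩ <;>
      simp only [ne_eq, mul_eq_zero, not_or, pow_eq_zero_iff two_ne_zero] at hM ⊢ <;> tauto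
  · rintro ⟨⟨b, c, d, n⟩, ⟨x, y⟩⟩ ht ⟨⟨b', c', d', n'⟩, ⟨x', y'⟩⟩ ht' he
    simp only [mem_sigma, mem_filter_lcm_sq_mul_eq, mem_divisorsAntidiagonal] at ht ht'
    simp only [Sigma.mk.inj_iff, Prod.mk.injEq, heq_eq_eq] at he
    obtain ⟨-, hd, ⟨hx, hy⟩, rfl, rfl⟩ := he
    obtain ⟨⟨rfl, hM⟩, rfl, -⟩ := ht
    obtain ⟨-, rfl, -⟩ := ht'
    simp only [ne_eq, mul_eq_zero, not_or, pow_eq_zero_iff two_ne_zero] at hM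
    obtain rfl := Nat.eq_of_mul_eq_mul_left (pos_of_ne_zero hM.1.1.2) hd
    obtain rfl := Nat.eq_of_mul_eq_mul_left (pos_of_ne_zero hM.1.1.1.1) hx
    obtain rfl := Nat.eq_of_mul_eq_mul_left (pos_of_ne_zero hM.1.1.1.2) hy
    rfl
  · rintro ⟨⟨A, K⟩, f, ⟨x, y⟩, ⟨b, c⟩⟩ hs
    simp only [mem_sigma, mem_divisorsAntidiagonal, mem_filter, mem_product, mem_divisors] at hs
    obtain ⟨⟨rfl, hM⟩, ⟨-, rfl⟩, ⟨rfl, -⟩, ⟨hb, -⟩, hc, -⟩ := hs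
    obtain ⟨d, rfl⟩ := lcm_dvd (hb.trans (gcd_dvd_left _ _)) (hc.trans (gcd_dvd_left _ _))
    obtain ⟨x, rfl⟩ := hb.trans (gcd_dvd_right _ _)
    obtain ⟨y, rfl⟩ := hc.trans (gcd_dvd_right _ _)
    refine ⟨⟨(b, c, d, x * y), (x, y)⟩, ?_, rfl⟩
    simp only [mem_sigma, mem_filter_lcm_sq_mul_eq, mem_divisorsAntidiagonal]
    refine ⟨⟨by ring, hM⟩, trivial, ?_⟩
    simp only [ne_eq, mul_eq_zero, not_or] at hM ⊢
    tauto

end Nat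

namespace ArithmeticFunction

variable {R : Type*}

def ofFun [Zero R] (f : ℕ → R) : ArithmeticFunction R :=
  ⟨fun n => if n = 0 then 0 else f n, if_pos rfl⟩

theorem ofFun_apply [Zero R] (f : ℕ → R) (n : ℕ) : ofFun f n = if n = 0 then 0 else f n :=
  rfl

theorem ofFun_apply_of_ne_zero [Zero R] {f : ℕ → R} {n : ℕ} (hn : n ≠ 0) : ofFun f n = f n :=
  if_neg hn

theorem ofFun_one : ofFun (fun _ => 1) = ζ := by
  ext n
  rw [ofFun_apply, zeta_apply]

theorem sum_quadruples_eq_ofFun_mul_apply [CommSemiring R] (f g h k : ℕ → R) (N : ℕ) :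
    ∑ p ∈ (Icc 1 N ×ˢ Icc 1 N ×ˢ Icc 1 N ×ˢ Icc 1 N).filter
        (fun p => p.1 * p.2.1 * p.2.2.1 * p.2.2.2 = N),
      f p.1 * g p.2.1 * h p.2.2.1 * k p.2.2.2 = (ofFun f * ofFun g * (ofFun h * ofFun k)) N := by
  simp only [mul_apply, sum_mul_sum, ← sum_product', sum_sigma']
  refine sum_nbij' (fun p => ⟨(p.1 * p.2.1, p.2.2.1 * p.2.2.2), ((p.1, p.2.1), (p.2.2.1, p.2.2.2))⟩)
    (fun s => (s.2.1.1, s.2.1.2, s.2.2.1, s.2.2.2)) ?_ ?_ (by aesop) (by aesop) ?_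
  · rintro ⟨a, b, c, d⟩ hp
    simp only [mem_filter, mem_product, mem_Icc] at hp
    simp only [mem_sigma, Nat.mem_divisorsAntidiagonal, mem_product]
    obtain ⟨⟨⟨ha, -⟩, ⟨hb, -⟩, ⟨hc, -⟩, hd, -⟩, rfl⟩ := hp
    refine ⟨⟨by ring, ?_⟩, ⟨trivial, ?_⟩, trivial, ?_⟩ <;> simp <;> omega
  · rintro ⟨⟨M₁, M₂⟩, ⟨a, b⟩, ⟨c, d⟩⟩ hs
    simp only [mem_sigma, Nat.mem_divisorsAntidiagonal, mem_product] at hs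
    simp only [mem_filter, mem_product]
    obtain ⟨⟨rfl, hN⟩, ⟨rfl, -⟩, rfl, -⟩ := hs
    refine ⟨⟨?_, ?_, ?_, ?_⟩, by ring⟩ <;> refine Nat.mem_Icc_one_of_dvd ?_ hN <;>
      simp [Dvd.dvd.mul_right, Dvd.dvd.mul_left]
  · rintro ⟨a, b, c, d⟩ hp
    simp only [mem_filter, mem_product, mem_Icc, Nat.one_le_iff_ne_zero] at hp
    obtain ⟨⟨⟨ha, -⟩, ⟨hb, -⟩, ⟨hc, -⟩, hd, -⟩, -⟩ := hp
    simp only [ofFun_apply_of_ne_zero, ha, hb, hc, hd, ne_eq, not_false_eq_true, mul_assoc]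

theorem sum_divisors_moebius [Ring R] (n : ℕ) :
    ∑ d ∈ n.divisors, (μ d : R) = if n = 1 then 1 else 0 := by
  have h : ((μ : ArithmeticFunction R) * ζ) n = (1 : ArithmeticFunction R) n := by
    rw [coe_moebius_mul_coe_zeta]
  simpa only [coe_mul_zeta_apply, intCoe_apply, one_apply] using h

theorem sigma_zero_mul_eq_sum_moebius [CommRing R] (m n : ℕ) :
    (σ 0 (m * n) : R) = ∑ b ∈ (m.gcd n).divisors, (μ b : R) * σ 0 (m / b) * σ 0 (n / b) := by
  have hcard : ∀ b ∈ (m.gcd n).divisors, (μ b : R) * σ 0 (m / b) * σ 0 (n / b) =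
      ∑ _p ∈ (m / b).divisors ×ˢ (n / b).divisors, (μ b : R) := by
    intro b _
    rw [sum_const, card_product, nsmul_eq_mul, sigma_zero_apply, sigma_zero_apply]
    push_cast
    ring
  rw [sum_congr rfl hcard, Nat.sum_divisors_gcd_sum_divisors_div, sigma_zero_apply,
    Nat.card_divisors_mul_eq_card_filter_coprime, card_filter, Nat.cast_sum]
  simp only [Nat.Coprime, Nat.cast_ite, Nat.cast_one, Nat.cast_zero, sum_divisors_moebius]

end ArithmeticFunction

theorem sigma4_eq_sigma_zero_mul_apply (n : ℕ) : sigma4 n = (σ 0 * σ 0) n := by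
  rw [← zeta_mul_pow_eq_sigma, pow_zero_eq_zeta, ← ofFun_one,
    ← sum_quadruples_eq_ofFun_mul_apply, sigma4, card_eq_sum_ones]
  simp only [mul_one]

section Hecke

variable {q : ℕ}

def HeckeRelation (χ : DirichletCharacter ℂ q) (lam : ℕ → ℂ) : Prop :=
  ∀ m n : ℕ, 0 < m → 0 < n →
    lam m * lam n = ∑ d ∈ (Nat.gcd m n).divisors, χ (d : ZMod q) * lam (m * n / d ^ 2)

noncomputable def squareChar (χ : DirichletCharacter ℂ q) : ArithmeticFunction ℂ :=
  ⟨fun n => ∑ d ∈ n.divisors with d * d = n, χ d, by simp⟩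

variable {χ : DirichletCharacter ℂ q} {lam : ℕ → ℂ}

theorem squareChar_apply (n : ℕ) : squareChar χ n = ∑ d ∈ n.divisors with d * d = n, χ d :=
  rfl

theorem squareChar_mul_squareChar_apply (n : ℕ) :
    (squareChar χ * squareChar χ) n = ∑ j ∈ n.divisors with j * j = n, χ j * σ 0 j := by
  have expand : ∀ j ∈ n.divisors.filter (fun j => j * j = n),
      χ j * σ 0 j = ∑ x ∈ j.divisorsAntidiagonal, χ x.1 * χ x.2 := by
    intro j _
    rw [sum_congr rfl fun x hx => by
        rw [← map_mul, ← Nat.cast_mul, (Nat.mem_divisorsAntidiagonal.1 hx).1],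
      sum_const, Nat.card_divisorsAntidiagonal, sigma_zero_apply, nsmul_eq_mul, mul_comm]
  rw [sum_congr rfl expand, mul_apply]
  simp only [squareChar_apply, sum_mul_sum, ← sum_product', sum_sigma']
  refine sum_nbij' (fun s => ⟨s.2.1 * s.2.2, s.2⟩) (fun t => ⟨(t.2.1 * t.2.1, t.2.2 * t.2.2), t.2⟩)
    ?_ ?_ ?_ ?_ (fun _ _ => rfl)
  · rintro ⟨⟨B₁, B₂⟩, a, e⟩ hs
    simp only [mem_sigma, Nat.mem_divisorsAntidiagonal, mem_product, mem_filter,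
      Nat.mem_divisors] at hs ⊢
    obtain ⟨⟨rfl, hn⟩, ⟨-, rfl⟩, -, rfl⟩ := hs
    refine ⟨⟨⟨⟨a * e, by ring⟩, hn⟩, by ring⟩, trivial, ?_⟩
    simp only [ne_eq, mul_eq_zero, not_or] at hn ⊢
    exact ⟨hn.1.1, hn.2.1⟩
  · rintro ⟨j, a, e⟩ ht
    simp only [mem_sigma, Nat.mem_divisorsAntidiagonal, mem_product, mem_filter,
      Nat.mem_divisors] at ht ⊢
    obtain ⟨⟨⟨-, hn⟩, rfl⟩, rfl, hae⟩ := ht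
    simp only [ne_eq, mul_eq_zero, not_or] at hae
    refine ⟨⟨by ring, hn⟩, ⟨⟨dvd_mul_right a a, ?_⟩, trivial⟩, ⟨dvd_mul_right e e, ?_⟩, trivial⟩ <;>
      simp [hae]
  · rintro ⟨⟨B₁, B₂⟩, a, e⟩ hs
    simp only [mem_sigma, mem_product, mem_filter] at hs
    rw [hs.2.1.2, hs.2.2.2]
  · rintro ⟨j, a, e⟩ ht
    simp only [mem_sigma, Nat.mem_divisorsAntidiagonal] at ht
    rw [ht.2.1]

theorem HeckeRelation.pmul_mul_pmul_apply (h : HeckeRelation χ lam) (g k : ArithmeticFunction ℂ)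
    (M : ℕ) :
    (g.pmul (ofFun lam) * k.pmul (ofFun lam)) M =
      ∑ p ∈ M.divisorsAntidiagonal, ∑ f ∈ p.1.divisors with f * f = p.1,
        χ f * ∑ x ∈ p.2.divisorsAntidiagonal, g (f * x.1) * k (f * x.2) * lam (x.1 * x.2) := by
  have hecke : ∀ p ∈ M.divisorsAntidiagonal, g.pmul (ofFun lam) p.1 * k.pmul (ofFun lam) p.2 =
      ∑ f ∈ (p.1.gcd p.2).divisors, g p.1 * k p.2 * (χ f * lam (p.1 * p.2 / f ^ 2)) := by
    intro p hp
    have h₁ := Nat.left_ne_zero_of_mem_divisorsAntidiagonal hp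
    have h₂ := Nat.right_ne_zero_of_mem_divisorsAntidiagonal hp
    rw [pmul_apply, pmul_apply, ofFun_apply_of_ne_zero h₁, ofFun_apply_of_ne_zero h₂,
      mul_mul_mul_comm, h _ _ (Nat.pos_of_ne_zero h₁) (Nat.pos_of_ne_zero h₂), mul_sum]
  rw [mul_apply, sum_congr rfl hecke, Nat.sum_divisorsAntidiagonal_sum_gcd_eq_sum_sq M
    fun f m n => g m * k n * (χ f * lam (m * n / f ^ 2))]
  refine sum_congr rfl fun p _ => sum_congr rfl fun f hf => ?_
  have hf0 : f ≠ 0 := Nat.ne_of_gt (Nat.pos_of_mem_divisors (mem_filter.1 hf).1)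
  rw [mul_sum]
  refine sum_congr rfl fun x _ => ?_
  rw [Nat.mul_mul_mul_div_sq _ _ hf0]
  ring

theorem HeckeRelation.ofFun_mul_self (h : HeckeRelation χ lam) :
    ofFun lam * ofFun lam = squareChar χ * (σ 0 : ArithmeticFunction ℂ).pmul (ofFun lam) := by
  ext M
  have hM := h.pmul_mul_pmul_apply ζ ζ M
  rw [zeta_pmul] at hM
  rw [hM, mul_apply]
  refine sum_congr rfl fun p hp => ?_
  rw [squareChar_apply, sum_mul]
  refine sum_congr rfl fun f hf => ?_
  have hf0 : f ≠ 0 := Nat.ne_of_gt (Nat.pos_of_mem_divisors (mem_filter.1 hf).1)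
  rw [pmul_apply, ofFun_apply_of_ne_zero (Nat.right_ne_zero_of_mem_divisorsAntidiagonal hp),
    natCoe_apply, sigma_zero_apply, ← Nat.card_divisorsAntidiagonal, ← nsmul_eq_mul, ← sum_const]
  congr 1
  refine sum_congr rfl fun x hx => ?_
  rw [natCoe_apply, natCoe_apply,
    zeta_apply_ne (mul_ne_zero hf0 (Nat.left_ne_zero_of_mem_divisorsAntidiagonal hx)),
    zeta_apply_ne (mul_ne_zero hf0 (Nat.right_ne_zero_of_mem_divisorsAntidiagonal hx)),
    (Nat.mem_divisorsAntidiagonal.1 hx).1, Nat.cast_one, one_mul, one_mul]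

theorem HeckeRelation.pmul_sigma_zero_mul_self_apply (h : HeckeRelation χ lam) (M : ℕ) :
    ((σ 0 : ArithmeticFunction ℂ).pmul (ofFun lam) * (σ 0 : ArithmeticFunction ℂ).pmul (ofFun lam))
      M =
    ∑ t ∈ (M.divisors ×ˢ M.divisors ×ˢ M.divisors ×ˢ M.divisors).filter
        (fun t => t.1 * t.2.1 * Nat.lcm t.1 t.2.1 ^ 2 * t.2.2.1 ^ 2 * t.2.2.2 = M),
      χ ((Nat.lcm t.1 t.2.1 * t.2.2.1 : ℕ) : ZMod q) * μ t.1 * μ t.2.1 *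
        σ 0 (t.2.2.1 * Nat.lcm t.1 t.2.1 / t.1) * σ 0 (t.2.2.1 * Nat.lcm t.1 t.2.1 / t.2.1) *
        lam (t.1 * t.2.1 * t.2.2.2) * sigma4 t.2.2.2 := by
  have expand : ∀ f : ℕ, ∀ x : ℕ × ℕ,
      χ f * ((σ 0 (f * x.1) : ℂ) * σ 0 (f * x.2) * lam (x.1 * x.2)) =
        ∑ bc ∈ (f.gcd x.1).divisors ×ˢ (f.gcd x.2).divisors,
          χ f * μ bc.1 * μ bc.2 * σ 0 (f / bc.1) * σ 0 (f / bc.2) * (σ 0 (x.1 / bc.1) *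
            σ 0 (x.2 / bc.2) * lam (x.1 * x.2)) := by
    intro f x
    rw [sigma_zero_mul_eq_sum_moebius, sigma_zero_mul_eq_sum_moebius, sum_mul_sum,
      ← sum_product', sum_mul, mul_sum]
    refine sum_congr rfl fun _ _ => by ring
  simp only [h.pmul_mul_pmul_apply, natCoe_apply, mul_sum, expand]
  refine (Nat.sum_sq_mul_sum_gcd_eq_sum_lcm M fun b c f x y => χ f * μ b * μ c * σ 0 (f / b) *
    σ 0 (f / c) * ((σ 0 (x / b) : ℂ) * σ 0 (y / c) * lam (x * y))).trans
    (sum_congr rfl fun ⟨b, c, d, n⟩ ht => ?_)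
  simp only [mem_filter, mem_product, Nat.mem_divisors] at ht
  have hb := Nat.pos_of_ne_zero (ne_zero_of_dvd_ne_zero ht.1.1.2 ht.1.1.1)
  have hc := Nat.pos_of_ne_zero (ne_zero_of_dvd_ne_zero ht.1.2.1.2 ht.1.2.1.1)
  rw [sigma4_eq_sigma_zero_mul_apply, mul_apply, Nat.cast_sum, mul_sum]
  refine sum_congr rfl fun y hy => ?_
  rw [Nat.mul_div_cancel_left _ hb, Nat.mul_div_cancel_left _ hc, mul_comm d,
    show b * y.1 * (c * y.2) = b * c * (y.1 * y.2) by ring, (Nat.mem_divisorsAntidiagonal.1 hy).1]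
  push_cast
  ring

theorem HeckeRelation.sum_quintuples_eq_mul_apply (h : HeckeRelation χ lam) (N : ℕ) :
    ∑ p ∈ (N.divisors ×ˢ N.divisors ×ˢ N.divisors ×ˢ N.divisors ×ˢ N.divisors).filter
        (fun p : ℕ × ℕ × ℕ × ℕ × ℕ =>
          p.1 * p.2.1 * Nat.lcm p.1 p.2.1 ^ 2 * p.2.2.1 ^ 2 * p.2.2.2.1 ^ 2 * p.2.2.2.2 = N),
      χ ((p.2.2.2.1 * Nat.lcm p.1 p.2.1 * p.2.2.1 : ℕ) : ZMod q) *
        (moebius p.1 : ℂ) * (moebius p.2.1 : ℂ) *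
        (((p.2.2.1 * Nat.lcm p.1 p.2.1 / p.1).divisors.card : ℂ)) *
        (((p.2.2.1 * Nat.lcm p.1 p.2.1 / p.2.1).divisors.card : ℂ)) *
        ((p.2.2.2.1.divisors.card : ℂ)) *
        lam (p.1 * p.2.1 * p.2.2.2.2) * (sigma4 p.2.2.2.2 : ℂ) =
    (squareChar χ * squareChar χ * ((σ 0 : ArithmeticFunction ℂ).pmul (ofFun lam) *
      (σ 0 : ArithmeticFunction ℂ).pmul (ofFun lam))) N := by
  simp only [mul_apply (f := squareChar χ * squareChar χ), squareChar_mul_squareChar_apply,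
    h.pmul_sigma_zero_mul_self_apply, sum_mul, mul_sum, sum_sigma']
  refine sum_bij (fun p _ => ⟨(p.2.2.2.1 * p.2.2.2.1,
      p.1 * p.2.1 * Nat.lcm p.1 p.2.1 ^ 2 * p.2.2.1 ^ 2 * p.2.2.2.2),
      ⟨(p.1, p.2.1, p.2.2.1, p.2.2.2.2), p.2.2.2.1⟩⟩) ?_ ?_ ?_ ?_
  · rintro ⟨b, c, d, j, n⟩ hp
    simp only [mem_filter, mem_product, Nat.mem_divisors] at hp
    obtain ⟨⟨⟨-, hN⟩, -⟩, rfl⟩ := hp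
    simp only [mem_sigma, Nat.mem_filter_lcm_sq_mul_eq]
    simp only [Nat.mem_divisorsAntidiagonal, mem_filter, Nat.mem_divisors]
    refine ⟨⟨by ring, hN⟩, ⟨trivial, ?_⟩, ⟨dvd_mul_right j j, ?_⟩, trivial⟩ <;>
      simp only [ne_eq, mul_eq_zero, not_or, pow_eq_zero_iff two_ne_zero] at hN ⊢ <;> tauto
  · rintro ⟨b, c, d, j, n⟩ - ⟨b', c', d', j', n'⟩ - he
    simp only [Sigma.mk.inj_iff, Prod.mk.injEq, heq_eq_eq] at he
    obtain ⟨-, ⟨rfl, rfl, rfl, rfl⟩, rfl⟩ := he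
    rfl
  · rintro ⟨⟨B, M⟩, ⟨b, c, d, n⟩, j⟩ hs
    simp only [mem_sigma, Nat.mem_filter_lcm_sq_mul_eq] at hs
    simp only [Nat.mem_divisorsAntidiagonal, mem_filter, Nat.mem_divisors] at hs
    obtain ⟨⟨rfl, hN⟩, ⟨rfl, -⟩, -, rfl⟩ := hs
    refine ⟨(b, c, d, j, n), ?_, rfl⟩
    simp only [mem_filter, mem_product, Nat.mem_divisors]
    refine ⟨⟨⟨?_, hN⟩, ⟨?_, hN⟩, ⟨?_, hN⟩, ⟨?_, hN⟩, ⟨?_, hN⟩⟩, by ring⟩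
    all_goals simp (maxDischargeDepth := 7) [Dvd.dvd.mul_left, Dvd.dvd.mul_right]
  · rintro ⟨b, c, d, j, n⟩ -
    simp only [sigma_zero_apply, Nat.cast_mul, map_mul]
    ring

end Hecke

theorem hecke_fourth_sum_expanded_general (q : ℕ) (χ : DirichletCharacter ℂ q)
    (lam : ℕ → ℂ)
    (hHecke : ∀ m n : ℕ, 0 < m → 0 < n →
      lam m * lam n = ∑ d ∈ (Nat.gcd m n).divisors, χ (d : ZMod q) * lam (m * n / d ^ 2))
    (N : ℕ) :
    ∑ p ∈ (Finset.Icc 1 N ×ˢ Finset.Icc 1 N ×ˢ Finset.Icc 1 N ×ˢ Finset.Icc 1 N).filter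
        (fun p => p.1 * p.2.1 * p.2.2.1 * p.2.2.2 = N),
      lam p.1 * lam p.2.1 * lam p.2.2.1 * lam p.2.2.2 =
    ∑ p ∈ (N.divisors ×ˢ N.divisors ×ˢ N.divisors ×ˢ N.divisors ×ˢ N.divisors).filter
        (fun p : ℕ × ℕ × ℕ × ℕ × ℕ =>
          p.1 * p.2.1 * Nat.lcm p.1 p.2.1 ^ 2 * p.2.2.1 ^ 2 * p.2.2.2.1 ^ 2 * p.2.2.2.2 = N),
      χ ((p.2.2.2.1 * Nat.lcm p.1 p.2.1 * p.2.2.1 : ℕ) : ZMod q) *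
        (moebius p.1 : ℂ) * (moebius p.2.1 : ℂ) *
        (((p.2.2.1 * Nat.lcm p.1 p.2.1 / p.1).divisors.card : ℂ)) *
        (((p.2.2.1 * Nat.lcm p.1 p.2.1 / p.2.1).divisors.card : ℂ)) *
        ((p.2.2.2.1.divisors.card : ℂ)) *
        lam (p.1 * p.2.1 * p.2.2.2.2) * (sigma4 p.2.2.2.2 : ℂ) := by
  rw [sum_quadruples_eq_ofFun_mul_apply, HeckeRelation.ofFun_mul_self hHecke,
    mul_mul_mul_comm, HeckeRelation.sum_quintuples_eq_mul_apply hHecke]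

/-- If `λ : ℕ₊ → ℂ` satisfies the Hecke relation with respect to a Dirichlet
character `χ` mod `q` (extended by zero), then for every positive integer `N`,
`∑_{n₁ n₂ n₃ n₄ = N} λ(n₁) λ(n₂) λ(n₃) λ(n₄)
  = ∑_{b c [b,c]² d² j² n = N} χ(j [b,c] d) μ(b) μ(c) τ(d [b,c]/b) τ(d [b,c]/c) τ(j)
      λ(b c n) σ₄(n)`. -/
theorem hecke_fourth_sum_expanded (q : ℕ) (hq : 0 < q) (χ : DirichletCharacter ℂ q)
    (lam : ℕ → ℂ)
    (hHecke : ∀ m n : ℕ, 0 < m → 0 < n →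
      lam m * lam n = ∑ d ∈ (Nat.gcd m n).divisors, χ (d : ZMod q) * lam (m * n / d ^ 2))
    (N : ℕ) (hN : 0 < N) :
    ∑ p ∈ (Finset.Icc 1 N ×ˢ Finset.Icc 1 N ×ˢ Finset.Icc 1 N ×ˢ Finset.Icc 1 N).filter
        (fun p => p.1 * p.2.1 * p.2.2.1 * p.2.2.2 = N),
      lam p.1 * lam p.2.1 * lam p.2.2.1 * lam p.2.2.2 =
    ∑ p ∈ (N.divisors ×ˢ N.divisors ×ˢ N.divisors ×ˢ N.divisors ×ˢ N.divisors).filter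
        (fun p : ℕ × ℕ × ℕ × ℕ × ℕ =>
          p.1 * p.2.1 * Nat.lcm p.1 p.2.1 ^ 2 * p.2.2.1 ^ 2 * p.2.2.2.1 ^ 2 * p.2.2.2.2 = N),
      χ ((p.2.2.2.1 * Nat.lcm p.1 p.2.1 * p.2.2.1 : ℕ) : ZMod q) *
        (moebius p.1 : ℂ) * (moebius p.2.1 : ℂ) *
        (((p.2.2.1 * Nat.lcm p.1 p.2.1 / p.1).divisors.card : ℂ)) *
        (((p.2.2.1 * Nat.lcm p.1 p.2.1 / p.2.1).divisors.card : ℂ)) *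
        ((p.2.2.2.1.divisors.card : ℂ)) *
        lam (p.1 * p.2.1 * p.2.2.2.2) * (sigma4 p.2.2.2.2 : ℂ) :=
  hecke_fourth_sum_expanded_general q χ lam hHecke N
end

section
/- Let k ≥ 3 be an integer and let H be a function holomorphic on the strip |Re(s)| < 3, bounded there, even (H(-s) = H(s)), with H(0) = 1. Define, for ξ > 0, 𝒱(ξ) = (1/2πi) ∫_{Re(s)=1} H(s)⁴ · (Γ(s + k/2)⁴ / Γ(k/2)⁴) · ξ^{-s} ds/s (the integral over the vertical line Re(s) = 1). Then for every A with 0 < A < 1 there exists a constant C > 0 such that |𝒱(x) - 1| ≤ C x^{A} for all x with 0 < x ≤ 1. -/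
/-!
Shift the line of integration from `Re s = 1` to `Re s = -A`. The only pole crossed is the simple
pole at `s = 0`, with residue `H(0)⁴ = 1`, and it produces the main term. The bounds
`‖Γ w‖ ≤ Γ(Re w)` and `‖w Γ(w)‖ ≤ Γ(Re w + 1)` make `H(s)⁴ Γ(s + k/2)⁴` of size `O(1/(1 + t²))`
uniformly on the strip `-A ≤ Re s ≤ 1`, and `|x^{-s}| = x^A` on the new line, so the shifted
integral is `O(x^A)`. The pole is handled by applying Cauchy's theorem on rectangles to the
removable singularity `(Φ(s) - Φ(0))/s`, together with the explicit principal value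
`∫_{-T}^{T} dt/(c + it) = 2 arctan(T/c) → ±π`.
-/

open Complex MeasureTheory Set Filter Topology
open scoped Real Interval

namespace Complex

theorem norm_Gamma_le_Gamma_re {s : ℂ} (hs : 0 < s.re) : ‖Gamma s‖ ≤ Real.Gamma s.re := by
  rw [Gamma_eq_integral hs, Real.Gamma_eq_integral hs, GammaIntegral]
  refine (norm_integral_le_integral_norm _).trans_eq (setIntegral_congr_fun measurableSet_Ioi
    fun x hx => ?_)
  rw [norm_mul, norm_real, norm_cpow_eq_rpow_re_of_pos hx, Real.norm_of_nonneg (Real.exp_pos _).le]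
  simp

theorem norm_mul_norm_Gamma_le {s : ℂ} (hs : 0 < s.re) :
    ‖s‖ * ‖Gamma s‖ ≤ Real.Gamma (s.re + 1) := by
  rw [← norm_mul, ← Gamma_add_one s (ne_of_apply_ne re hs.ne')]
  simpa using norm_Gamma_le_Gamma_re (s := s + 1) (by simp; linarith)

theorem one_add_sq_im_le {s : ℂ} (hs : s.re ≠ 0) :
    1 + s.im ^ 2 ≤ (1 + (s.re ^ 2)⁻¹) * ‖s‖ ^ 2 := by
  have him := sq_norm_sub_sq_re s
  have hnorm : 1 ≤ ‖s‖ ^ 2 / s.re ^ 2 := by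
    rw [one_le_div (by positivity)]; nlinarith [sq_nonneg s.im]
  rw [add_mul, one_mul, inv_mul_eq_div]
  nlinarith [sq_nonneg s.re]

theorem exists_norm_Gamma_sq_le {a b : ℝ} (ha : 0 < a) :
    ∃ K, 0 ≤ K ∧ ∀ s : ℂ, s.re ∈ Icc a b → ‖Gamma s‖ ^ 2 ≤ K / (1 + s.im ^ 2) := by
  set B := max (Real.Gamma (a + 1)) (Real.Gamma (b + 1))
  refine ⟨(1 + (a ^ 2)⁻¹) * B ^ 2, by positivity, fun s hs => ?_⟩
  have hre : 0 < s.re := ha.trans_le hs.1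
  have hΓ : ‖s‖ * ‖Gamma s‖ ≤ B :=
    (norm_mul_norm_Gamma_le hre).trans <| Real.convexOn_Gamma.le_max_of_mem_Icc
      (by simp only [mem_Ioi]; linarith) (by simp only [mem_Ioi]; linarith [hs.2])
      ⟨by linarith [hs.1], by linarith [hs.2]⟩
  have hinv : (s.re ^ 2)⁻¹ ≤ (a ^ 2)⁻¹ :=
    inv_anti₀ (by positivity) (pow_le_pow_left₀ ha.le hs.1 2)
  rw [le_div_iff₀ (by positivity)]
  calc ‖Gamma s‖ ^ 2 * (1 + s.im ^ 2)
      ≤ ‖Gamma s‖ ^ 2 * ((1 + (s.re ^ 2)⁻¹) * ‖s‖ ^ 2) := by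
        gcongr; exact one_add_sq_im_le hre.ne'
    _ = (1 + (s.re ^ 2)⁻¹) * (‖s‖ * ‖Gamma s‖) ^ 2 := by ring
    _ ≤ (1 + (a ^ 2)⁻¹) * B ^ 2 := by gcongr

theorem ofReal_add_mul_I_ne_zero {a : ℝ} (ha : a ≠ 0) (t : ℝ) : (a : ℂ) + t * I ≠ 0 :=
  fun h => ha (by simpa using congrArg re h)

end Complex

noncomputable def gammaWeight (κ : ℝ) (H : ℂ → ℂ) (s : ℂ) : ℂ :=
  H s ^ 4 * (Gamma (s + κ) ^ 4 / Gamma κ ^ 4)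

section gammaWeight

variable {κ : ℝ} {H : ℂ → ℂ}

theorem gammaWeight_zero (hκ : 0 < κ) (h0 : H 0 = 1) : gammaWeight κ H 0 = 1 := by
  simp [gammaWeight, h0, Gamma_ne_zero_of_re_pos (s := κ) (by simpa using hκ)]

theorem differentiableOn_gammaWeight {S : Set ℂ} (hH : DifferentiableOn ℂ H S)
    (hS : ∀ s ∈ S, 0 < s.re + κ) : DifferentiableOn ℂ (gammaWeight κ H) S := by
  intro s hs
  have hΓ : DifferentiableAt ℂ Gamma (s + κ) := by
    refine differentiableAt_Gamma _ fun m hm => ?_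
    have := congrArg re hm
    simp only [add_re, neg_re, natCast_re, ofReal_re] at this
    linarith [hS s hs, (Nat.cast_nonneg m : (0 : ℝ) ≤ m)]
  exact ((hH s hs).pow 4).mul
    (((hΓ.comp s (differentiableAt_id.add_const (κ : ℂ))).pow 4).div_const _).differentiableWithinAt

theorem exists_norm_gammaWeight_le {a b M : ℝ} (ha : 0 < a + κ)
    (hM : ∀ s : ℂ, s.re ∈ Icc a b → ‖H s‖ ≤ M) :
    ∃ K, 0 ≤ K ∧ ∀ s : ℂ, s.re ∈ Icc a b → ‖gammaWeight κ H s‖ ≤ K / (1 + s.im ^ 2) := by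
  obtain ⟨K, hK0, hK⟩ := exists_norm_Gamma_sq_le (b := b + κ) ha
  refine ⟨M ^ 4 * K ^ 2 / ‖Gamma κ‖ ^ 4, by positivity, fun s hs => ?_⟩
  have him : 1 ≤ 1 + s.im ^ 2 := le_add_of_nonneg_right (sq_nonneg _)
  have hΓ : ‖Gamma (s + κ)‖ ^ 2 ≤ K / (1 + s.im ^ 2) := by
    simpa using hK (s + κ) (by simpa using hs)
  have hΓ4 : ‖Gamma (s + κ)‖ ^ 4 ≤ K ^ 2 / (1 + s.im ^ 2) :=
    calc ‖Gamma (s + κ)‖ ^ 4 = (‖Gamma (s + κ)‖ ^ 2) ^ 2 := by ring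
      _ ≤ (K / (1 + s.im ^ 2)) ^ 2 := by gcongr
      _ = K ^ 2 / (1 + s.im ^ 2) / (1 + s.im ^ 2) := by ring
      _ ≤ K ^ 2 / (1 + s.im ^ 2) := div_le_self (by positivity) him
  rw [gammaWeight, norm_mul, norm_div, norm_pow, norm_pow, norm_pow]
  calc ‖H s‖ ^ 4 * (‖Gamma (s + κ)‖ ^ 4 / ‖Gamma κ‖ ^ 4)
      ≤ M ^ 4 * (K ^ 2 / (1 + s.im ^ 2) / ‖Gamma κ‖ ^ 4) := by
        gcongr
        exact hM s hs
    _ = M ^ 4 * K ^ 2 / ‖Gamma κ‖ ^ 4 / (1 + s.im ^ 2) := by ring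

end gammaWeight

section verticalLine

theorem integrable_of_norm_le_div_one_add_sq {E : Type*} [NormedAddCommGroup E] {f : ℝ → E}
    {C : ℝ} (hf : AEStronglyMeasurable f) (h : ∀ t, ‖f t‖ ≤ C / (1 + t ^ 2)) : Integrable f :=
  (integrable_inv_one_add_sq.const_mul C).mono' hf (ae_of_all _ h)

theorem norm_integral_le_of_norm_le_div_one_add_sq {E : Type*} [NormedAddCommGroup E]
    [NormedSpace ℝ E] {f : ℝ → E} {C : ℝ} (h : ∀ t, ‖f t‖ ≤ C / (1 + t ^ 2)) :
    ‖∫ t, f t‖ ≤ C * π :=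
  calc ‖∫ t, f t‖ ≤ ∫ t : ℝ, C * (1 + t ^ 2)⁻¹ :=
        norm_integral_le_of_norm_le (integrable_inv_one_add_sq.const_mul C) (ae_of_all _ h)
    _ = C * π := by rw [integral_const_mul, integral_univ_inv_one_add_sq]

theorem norm_div_vertical_le {z : ℂ} {a t K : ℝ} (ha : a ≠ 0) (hz : ‖z‖ ≤ K / (1 + t ^ 2)) :
    ‖z / (a + t * I)‖ ≤ K / |a| / (1 + t ^ 2) := by
  rw [norm_div, div_right_comm]
  exact div_le_div₀ ((norm_nonneg _).trans hz) hz (abs_pos.mpr ha)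
    (by simpa using abs_re_le_norm ((a : ℂ) + t * I))

theorem integrable_vertical_div {Φ : ℂ → ℂ} {a K : ℝ} (ha : a ≠ 0)
    (hΦ : ContinuousOn Φ (re ⁻¹' {a})) (hK : ∀ t : ℝ, ‖Φ (a + t * I)‖ ≤ K / (1 + t ^ 2)) :
    Integrable fun t : ℝ => Φ (a + t * I) / (a + t * I) := by
  have hcont : Continuous fun t : ℝ => Φ (a + t * I) :=
    hΦ.comp_continuous (by fun_prop) fun t => by simp
  exact integrable_of_norm_le_div_one_add_sq
    (hcont.div (by fun_prop) (ofReal_add_mul_I_ne_zero ha)).aestronglyMeasurable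
    fun t => norm_div_vertical_le ha (hK t)

theorem hasDerivAt_arctan_div_sub_log {c : ℝ} (hc : c ≠ 0) (t : ℝ) :
    HasDerivAt (fun t : ℝ => (Real.arctan (t / c) : ℂ) - I / 2 * Real.log (c ^ 2 + t ^ 2))
      ((c : ℂ) + t * I)⁻¹ t := by
  have hpos : 0 < c ^ 2 + t ^ 2 := by positivity
  have harctan := ((Real.hasDerivAt_arctan (t / c)).comp t
    ((hasDerivAt_id t).div_const c)).ofReal_comp
  have hlog := (((hasDerivAt_pow 2 t).const_add (c ^ 2)).log hpos.ne').ofReal_comp.const_mul (I / 2)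
  refine (harctan.sub hlog).congr_deriv ?_
  have hc' : (c : ℂ) ≠ 0 := ofReal_ne_zero.mpr hc
  have hpos' : (c : ℂ) ^ 2 + (t : ℂ) ^ 2 ≠ 0 := by exact_mod_cast hpos.ne'
  rw [eq_comm, ← mul_eq_one_iff_inv_eq₀ (ofReal_add_mul_I_ne_zero hc t)]
  push_cast
  field_simp
  linear_combination -(t : ℂ) ^ 2 * I_sq

theorem continuous_inv_vertical {c : ℝ} (hc : c ≠ 0) :
    Continuous fun t : ℝ => ((c : ℂ) + t * I)⁻¹ :=
  Continuous.inv₀ (by fun_prop) (ofReal_add_mul_I_ne_zero hc)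

theorem intervalIntegral_inv_vertical {c : ℝ} (hc : c ≠ 0) (T : ℝ) :
    ∫ t in -T..T, ((c : ℂ) + t * I)⁻¹ = 2 * Real.arctan (T / c) := by
  rw [intervalIntegral.integral_eq_sub_of_hasDerivAt
    (fun t _ => hasDerivAt_arctan_div_sub_log hc t)
    ((continuous_inv_vertical hc).intervalIntegrable _ _)]
  simp [neg_div, Real.arctan_neg]
  ring

theorem tendsto_arctan_div_atTop {c : ℝ} (hc : c ≠ 0) :
    Tendsto (fun T : ℝ => Real.arctan (T / c)) atTop (𝓝 (Real.sign c * (π / 2))) := by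
  rcases hc.lt_or_gt with hc | hc
  · rw [Real.sign_of_neg hc, neg_one_mul]
    exact (Real.tendsto_arctan_atBot.mono_right nhdsWithin_le_nhds).comp
      (tendsto_id.atTop_div_const_of_neg hc)
  · rw [Real.sign_of_pos hc, one_mul]
    exact (Real.tendsto_arctan_atTop.mono_right nhdsWithin_le_nhds).comp
      (tendsto_id.atTop_div_const hc)

end verticalLine

section contourShift

theorem dslope_zero_of_ne (Φ : ℂ → ℂ) {s : ℂ} (hs : s ≠ 0) :
    dslope Φ 0 s = Φ s / s - Φ 0 * s⁻¹ := by
  rw [dslope_of_ne _ hs, slope_def_field, sub_zero, sub_div, div_eq_mul_inv (Φ 0)]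

variable {Φ : ℂ → ℂ}

theorem abs_im_mul_norm_dslope_zero_le {K : ℝ} {s : ℂ} (hs : ‖Φ s‖ ≤ K) (h0 : ‖Φ 0‖ ≤ K) :
    |s.im| * ‖dslope Φ 0 s‖ ≤ 2 * K := by
  rcases eq_or_ne s 0 with rfl | hs0
  · simpa using (norm_nonneg _).trans h0
  rw [dslope_of_ne _ hs0, slope_def_field, sub_zero, norm_div]
  calc |s.im| * (‖Φ s - Φ 0‖ / ‖s‖) ≤ ‖s‖ * (‖Φ s - Φ 0‖ / ‖s‖) := by
        gcongr; exact abs_im_le_norm s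
    _ = ‖Φ s - Φ 0‖ := mul_div_cancel₀ _ (norm_ne_zero_iff.mpr hs0)
    _ ≤ 2 * K := by linarith [norm_sub_le (Φ s) (Φ 0)]

theorem tendsto_intervalIntegral_horizontal {g : ℂ → ℂ} {σ c B : ℝ}
    (hg : ∀ s : ℂ, s.re ∈ [[σ, c]] → |s.im| * ‖g s‖ ≤ B) :
    Tendsto (fun y : ℝ => ∫ τ in σ..c, g (τ + y * I)) (cocompact ℝ) (𝓝 0) := by
  have hlim : Tendsto (fun y : ℝ => B / |y| * |c - σ|) (cocompact ℝ) (𝓝 0) := by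
    simpa [div_eq_mul_inv] using ((tendsto_inv_atTop_zero.comp
      (tendsto_norm_cocompact_atTop (E := ℝ))).const_mul B).mul_const |c - σ|
  refine squeeze_zero_norm' ?_ hlim
  filter_upwards [(tendsto_norm_cocompact_atTop (E := ℝ)).eventually_gt_atTop 0] with y hy
  refine intervalIntegral.norm_integral_le_of_norm_le_const fun τ hτ => ?_
  rw [le_div_iff₀ (by simpa using hy), mul_comm]
  simpa using hg (τ + y * I) (by simpa using uIoc_subset_uIcc hτ)

theorem tendsto_intervalIntegral_dslope_vertical {c : ℝ} (hc : c ≠ 0)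
    (hΦ : Integrable fun t : ℝ => Φ (c + t * I) / (c + t * I)) :
    Tendsto (fun T : ℝ => ∫ t in -T..T, dslope Φ 0 (c + t * I)) atTop
      (𝓝 ((∫ t : ℝ, Φ (c + t * I) / (c + t * I)) - Φ 0 * (Real.sign c * π : ℝ))) := by
  have hsplit : ∀ T : ℝ, ∫ t in -T..T, dslope Φ 0 (c + t * I) =
      (∫ t in -T..T, Φ (c + t * I) / (c + t * I)) - Φ 0 * (2 * Real.arctan (T / c) : ℝ) := by
    intro T
    simp_rw [dslope_zero_of_ne Φ (ofReal_add_mul_I_ne_zero hc _)]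
    rw [intervalIntegral.integral_sub hΦ.intervalIntegrable
      (((continuous_inv_vertical hc).const_mul _).intervalIntegrable _ _),
      intervalIntegral.integral_const_mul, intervalIntegral_inv_vertical hc]
    push_cast; rfl
  simp_rw [hsplit]
  refine (intervalIntegral_tendsto_integral hΦ tendsto_neg_atTop_atBot tendsto_id).sub
    (tendsto_const_nhds.mul ((continuous_ofReal.tendsto _).comp ?_))
  convert (tendsto_arctan_div_atTop hc).const_mul 2 using 2
  ring

theorem integral_vertical_div_eq_add {σ c K : ℝ} (hσ : σ < 0) (hc : 0 < c)
    (hΦ : DifferentiableOn ℂ Φ (re ⁻¹' Icc σ c))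
    (hK : ∀ s : ℂ, s.re ∈ Icc σ c → ‖Φ s‖ ≤ K / (1 + s.im ^ 2)) :
    ∫ t : ℝ, Φ (c + t * I) / (c + t * I) =
      (∫ t : ℝ, Φ (σ + t * I) / (σ + t * I)) + 2 * π * Φ 0 := by
  have hσc : σ ≤ c := by linarith
  have hg : DifferentiableOn ℂ (dslope Φ 0) (re ⁻¹' Icc σ c) := by
    refine (differentiableOn_dslope (mem_of_superset ?_ (preimage_mono Ioo_subset_Icc_self))).2 hΦ
    exact (isOpen_Ioo.preimage continuous_re).mem_nhds (by simp [hσ, hc])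
  have hrect : ∀ T : ℝ, (∫ τ in σ..c, dslope Φ 0 (τ + ((-T : ℝ) : ℂ) * I)) -
      (∫ τ in σ..c, dslope Φ 0 (τ + T * I)) + I • (∫ t in -T..T, dslope Φ 0 (c + t * I)) -
      I • (∫ t in -T..T, dslope Φ 0 (σ + t * I)) = 0 := fun T => by
    simpa using integral_boundary_rect_eq_zero_of_differentiableOn (dslope Φ 0)
      (σ - T * I) (c + T * I) (hg.mono fun s hs => by simpa [uIcc_of_le hσc] using hs.1)
  have hK0 : 0 ≤ K := by simpa using (norm_nonneg _).trans (hK 0 (by simp [hσ.le, hc.le]))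
  have hbdd : ∀ s : ℂ, s.re ∈ Icc σ c → ‖Φ s‖ ≤ K := fun s hs =>
    (hK s hs).trans (div_le_self hK0 (le_add_of_nonneg_right (sq_nonneg _)))
  have hhor : ∀ s : ℂ, s.re ∈ [[σ, c]] → |s.im| * ‖dslope Φ 0 s‖ ≤ 2 * K := fun s hs =>
    abs_im_mul_norm_dslope_zero_le (hbdd s (by rwa [uIcc_of_le hσc] at hs))
      (hbdd 0 (by simp [hσ.le, hc.le]))
  have hvert : ∀ a ∈ Icc σ c, a ≠ 0 → Integrable fun t : ℝ => Φ (a + t * I) / (a + t * I) :=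
    fun a ha ha0 => integrable_vertical_div ha0
      (hΦ.continuousOn.mono fun s (hs : s.re = a) => by rw [mem_preimage, hs]; exact ha)
      fun t => by simpa using hK (a + t * I) (by simpa using ha)
  have hhor_lim := tendsto_intervalIntegral_horizontal hhor
  have hlim := ((hhor_lim.comp (tendsto_neg_atTop_atBot.mono_right atBot_le_cocompact)).sub
    (hhor_lim.comp (tendsto_id.mono_right atTop_le_cocompact))).add
    ((tendsto_intervalIntegral_dslope_vertical hc.ne' (hvert c ⟨hσc, le_rfl⟩ hc.ne')).const_smul I)
    |>.sub ((tendsto_intervalIntegral_dslope_vertical hσ.ne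
      (hvert σ ⟨le_rfl, hσc⟩ hσ.ne)).const_smul I)
  have hzero := tendsto_nhds_unique hlim (tendsto_const_nhds.congr fun T => (hrect T).symm)
  rw [Real.sign_of_pos hc, Real.sign_of_neg hσ] at hzero
  simp only [smul_eq_mul] at hzero
  push_cast at hzero
  have hI : I * ((∫ t : ℝ, Φ (c + t * I) / (c + t * I)) -
      ((∫ t : ℝ, Φ (σ + t * I) / (σ + t * I)) + 2 * π * Φ 0)) = 0 := by
    linear_combination hzero
  exact sub_eq_zero.mp ((mul_eq_zero.mp hI).resolve_left I_ne_zero)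

end contourShift

section lineIntegral

variable {κ A M x : ℝ} {H : ℂ → ℂ}

theorem integral_gammaWeight_vertical_shift (hA : 0 < A) (hκ : 0 < -A + κ)
    (hH : DifferentiableOn ℂ H (re ⁻¹' Icc (-A) 1))
    (hM : ∀ s : ℂ, s.re ∈ Icc (-A) 1 → ‖H s‖ ≤ M) (h0 : H 0 = 1) (hx0 : 0 < x) (hx1 : x ≤ 1) :
    ∫ t : ℝ, gammaWeight κ H (1 + t * I) * (x : ℂ) ^ (-(1 + t * I)) / (1 + t * I) =
      (∫ t : ℝ, gammaWeight κ H (-A + t * I) * (x : ℂ) ^ (-(-A + t * I)) / (-A + t * I)) +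
        2 * π := by
  obtain ⟨K, hK0, hK⟩ := exists_norm_gammaWeight_le hκ hM
  have hshift := integral_vertical_div_eq_add (Φ := fun s => gammaWeight κ H s * (x : ℂ) ^ (-s))
    (K := K * x ^ (-1 : ℝ)) (neg_lt_zero.2 hA) one_pos
    ((differentiableOn_gammaWeight hH fun s hs => by linarith [hs.1]).mul
      (differentiable_id.neg.const_cpow (Or.inl (ofReal_ne_zero.2 hx0.ne'))).differentiableOn)
    fun s hs => by
      rw [norm_mul, norm_cpow_eq_rpow_re_of_pos hx0, neg_re, mul_div_right_comm]
      exact mul_le_mul (hK s hs) (Real.rpow_le_rpow_of_exponent_ge hx0 hx1 (neg_le_neg hs.2))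
        (by positivity) ((norm_nonneg _).trans (hK s hs))
  simpa [gammaWeight_zero (κ := κ) (by linarith) h0] using hshift

theorem norm_integral_gammaWeight_vertical_le {K : ℝ} (hA : 0 < A) (hx : 0 < x)
    (hK : ∀ t : ℝ, ‖gammaWeight κ H (-A + t * I)‖ ≤ K / (1 + t ^ 2)) :
    ‖∫ t : ℝ, gammaWeight κ H (-A + t * I) * (x : ℂ) ^ (-(-A + t * I)) / (-A + t * I)‖ ≤
      K * x ^ A / A * π := by
  refine norm_integral_le_of_norm_le_div_one_add_sq fun t => ?_
  have hline := norm_div_vertical_le (a := -A) (neg_ne_zero.2 hA.ne')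
    (z := gammaWeight κ H (-A + t * I) * (x : ℂ) ^ (-(-A + t * I))) (K := K * x ^ A) (by
      rw [norm_mul, norm_cpow_eq_rpow_re_of_pos hx, mul_div_right_comm]
      exact mul_le_mul (hK t) (by simp) (by positivity) ((norm_nonneg _).trans (hK t)))
  simpa [abs_of_pos hA] using hline

theorem exists_norm_integral_gammaWeight_sub_one_le (hA : 0 < A) (hκ : 0 < -A + κ)
    (hH : DifferentiableOn ℂ H (re ⁻¹' Icc (-A) 1))
    (hM : ∀ s : ℂ, s.re ∈ Icc (-A) 1 → ‖H s‖ ≤ M) (h0 : H 0 = 1) :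
    ∃ C : ℝ, 0 < C ∧ ∀ x : ℝ, 0 < x → x ≤ 1 →
      ‖(2 * π : ℂ)⁻¹ * (∫ t : ℝ, gammaWeight κ H (1 + t * I) * (x : ℂ) ^ (-(1 + t * I)) /
        (1 + t * I)) - 1‖ ≤ C * x ^ A := by
  obtain ⟨K, hK0, hK⟩ := exists_norm_gammaWeight_le hκ hM
  refine ⟨K / (2 * A) + 1, by positivity, fun x hx0 hx1 => ?_⟩
  have hπ : (π : ℂ) ≠ 0 := ofReal_ne_zero.2 Real.pi_ne_zero
  rw [integral_gammaWeight_vertical_shift hA hκ hH hM h0 hx0 hx1, mul_add,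
    inv_mul_cancel₀ (mul_ne_zero two_ne_zero hπ), add_sub_cancel_right, norm_mul]
  calc _ ≤ (2 * π)⁻¹ * (K * x ^ A / A * π) := by
        gcongr
        · simp [abs_of_pos Real.pi_pos]
        · exact norm_integral_gammaWeight_vertical_le hA hx0 fun t =>
            by simpa using hK (-A + t * I) (by simp; linarith)
    _ = K / (2 * A) * x ^ A := by field_simp
    _ ≤ (K / (2 * A) + 1) * x ^ A := by gcongr; linarith

end lineIntegral

theorem V_near_one_general (k : ℕ) (hk : 3 ≤ k) (H : ℂ → ℂ)
    (hol : DifferentiableOn ℂ H {s : ℂ | |s.re| < 3})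
    (bdd : ∃ M : ℝ, ∀ s : ℂ, |s.re| < 3 → ‖H s‖ ≤ M)
    (h0 : H 0 = 1)
    (V : ℝ → ℂ)
    (hV : ∀ x : ℝ, 0 < x → V x =
      (1 / (2 * Real.pi * Complex.I)) *
        ∫ t : ℝ, (H (1 + t * Complex.I)) ^ 4 *
          ((Complex.Gamma ((1 + t * Complex.I) + (k : ℂ) / 2)) ^ 4 /
            (Complex.Gamma ((k : ℂ) / 2)) ^ 4) *
          (x : ℂ) ^ (-(1 + t * Complex.I)) / (1 + t * Complex.I) * Complex.I) :
    ∀ A : ℝ, 0 < A → A < 1 → ∃ C : ℝ, 0 < C ∧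
      ∀ x : ℝ, 0 < x → x ≤ 1 → ‖V x - 1‖ ≤ C * x ^ A := by
  intro A hA0 _
  obtain ⟨M, hM⟩ := bdd
  have hstrip : re ⁻¹' Icc (-A) 1 ⊆ {s : ℂ | |s.re| < 3} := fun s ⟨h1, h2⟩ =>
    show |s.re| < 3 from abs_lt.2 ⟨by linarith, by linarith⟩
  have hκ : 0 < -A + (k : ℝ) / 2 := by
    have : (3 : ℝ) ≤ k := by exact_mod_cast hk
    linarith
  obtain ⟨C, hC, hCx⟩ := exists_norm_integral_gammaWeight_sub_one_le hA0 hκ (hol.mono hstrip)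
    (fun s hs => hM s (hstrip hs)) h0
  refine ⟨C, hC, fun x hx0 hx1 => le_of_eq_of_le ?_ (hCx x hx0 hx1)⟩
  have hπ : (π : ℂ) ≠ 0 := ofReal_ne_zero.2 Real.pi_ne_zero
  have hcast : (((k : ℝ) / 2 : ℝ) : ℂ) = (k : ℂ) / 2 := by push_cast; ring
  rw [hV x hx0, integral_mul_const]
  simp only [gammaWeight, hcast]
  generalize (∫ t : ℝ, _ : ℂ) = J
  field_simp

/-- Let `k ≥ 3` and let `H` be holomorphic and bounded on `|Re s| < 3`, even, with
`H 0 = 1`.  Define `𝒱(ξ) = (1/2πi) ∫_{Re s = 1} H(s)⁴ Γ(s + k/2)⁴/Γ(k/2)⁴ ξ^{-s} ds/s`.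
Then for every `0 < A < 1` there is `C > 0` with `|𝒱(x) - 1| ≤ C x^A` for all
`0 < x ≤ 1`. -/
theorem V_near_one (k : ℕ) (hk : 3 ≤ k) (H : ℂ → ℂ)
    (hol : DifferentiableOn ℂ H {s : ℂ | |s.re| < 3})
    (bdd : ∃ M : ℝ, ∀ s : ℂ, |s.re| < 3 → ‖H s‖ ≤ M)
    (heven : ∀ s : ℂ, H (-s) = H s)
    (h0 : H 0 = 1)
    (V : ℝ → ℂ)
    (hV : ∀ x : ℝ, 0 < x → V x =
      (1 / (2 * Real.pi * Complex.I)) *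
        ∫ t : ℝ, (H (1 + t * Complex.I)) ^ 4 *
          ((Complex.Gamma ((1 + t * Complex.I) + (k : ℂ) / 2)) ^ 4 /
            (Complex.Gamma ((k : ℂ) / 2)) ^ 4) *
          (x : ℂ) ^ (-(1 + t * Complex.I)) / (1 + t * Complex.I) * Complex.I) :
    ∀ A : ℝ, 0 < A → A < 1 → ∃ C : ℝ, 0 < C ∧
      ∀ x : ℝ, 0 < x → x ≤ 1 → ‖V x - 1‖ ≤ C * x ^ A :=
  V_near_one_general k hk H hol bdd h0 V hV
end

section
/- For every ε > 0 there exists a constant C > 0 such that for every real number X ≥ 2, Σ gcd(b,c) · τ(j)² · τ(d·lcm(b,c)/b)² · τ(d·lcm(b,c)/c)² / (j·d·b·c) ≤ C·X^ε, where the sum is over all quadruples (b,c,d,j) of positive integers satisfying j·lcm(b,c)·d ≤ √X. -/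
/-!
Since `gcd(b,c) / (b c) = 1 / lcm(b,c)`, each summand is
`(τ(j) τ(d L / b) τ(d L / c))² / (j d L)` with `L = lcm(b,c)`. Every argument of `τ` is at most
`j L d ≤ √X`, so the divisor bound `τ(n) ≪_δ n^δ` makes the numerator `≪ X^(6δ)`. Forgetting
the constraint, the sum of `1 / (j d lcm(b,c))` over `b, c, d, j ≤ X` is at most `H^5`, `H` the
harmonic number of `⌊X⌋`, because `(b, c) ↦ (gcd, b / gcd, c / gcd)` is injective; and
`H ≪_δ X^δ`. Take `δ = ε / 11`.
-/

open Finset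

lemma natCast_add_one_le_mul_two_rpow {δ : ℝ} (hδ : 0 < δ) (a : ℕ) :
    (a + 1 : ℝ) ≤ (1 + (δ * Real.log 2)⁻¹) * 2 ^ (a * δ) := by
  have hlog : 0 < δ * Real.log 2 := mul_pos hδ (Real.log_pos one_lt_two)
  have hexp : 1 + a * (δ * Real.log 2) ≤ (2 : ℝ) ^ (a * δ) := by
    rw [Real.rpow_def_of_pos two_pos]
    linarith [Real.add_one_le_exp (Real.log 2 * (a * δ))]
  calc (a + 1 : ℝ) ≤ 1 + a + (a * (δ * Real.log 2) + (δ * Real.log 2)⁻¹) := by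
        linarith [inv_pos.mpr hlog, mul_nonneg a.cast_nonneg hlog.le]
    _ = (1 + (δ * Real.log 2)⁻¹) * (1 + a * (δ * Real.log 2)) := by field_simp; ring
    _ ≤ _ := by gcongr

lemma natCast_add_one_le_rpow_of_two_le_rpow {p δ : ℝ} (hp : 0 ≤ p) (h2 : 2 ≤ p ^ δ) (a : ℕ) :
    (a + 1 : ℝ) ≤ p ^ (a * δ) :=
  calc (a + 1 : ℝ) ≤ 2 ^ a := by exact_mod_cast Nat.lt_two_pow_self
    _ ≤ (p ^ δ) ^ a := by gcongr
    _ = p ^ (a * δ) := by rw [mul_comm, Real.rpow_mul_natCast hp]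

theorem exists_card_divisors_le_mul_rpow {δ : ℝ} (hδ : 0 < δ) :
    ∃ C > 0, ∀ n : ℕ, (#n.divisors : ℝ) ≤ C * (n : ℝ) ^ δ := by
  set M : ℝ := 1 + (δ * Real.log 2)⁻¹
  have hM : 1 ≤ M := le_add_of_nonneg_right (by positivity [Real.log_pos one_lt_two])
  set K : ℕ := ⌊(2 : ℝ) ^ δ⁻¹⌋₊
  refine ⟨M ^ (K + 1), by positivity, fun n => ?_⟩
  rcases eq_or_ne n 0 with rfl | hn
  · simp [Real.zero_rpow hδ.ne']
  -- A prime `p > K` has `p ^ δ ≥ 2`, so `p ^ (a δ)` absorbs `a + 1`; each of the at most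
  -- `K + 1` primes `p ≤ K` costs a factor `M`.
  have hprime : ∀ p ∈ n.primeFactors, ((n.factorization p + 1 : ℕ) : ℝ)
      ≤ (if p ≤ K then M else 1) * ((p : ℝ) ^ n.factorization p) ^ δ := by
    intro p hp
    have hp2 : (2 : ℝ) ≤ p := by exact_mod_cast (Nat.prime_of_mem_primeFactors hp).two_le
    rw [← Real.rpow_natCast, ← Real.rpow_mul (by positivity)]
    push_cast
    split_ifs with hpK
    · calc _ ≤ M * 2 ^ (n.factorization p * δ) := natCast_add_one_le_mul_two_rpow hδ _
        _ ≤ _ := by gcongr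
    · rw [one_mul]
      refine natCast_add_one_le_rpow_of_two_le_rpow (by positivity) ?_ _
      calc (2 : ℝ) = ((2 : ℝ) ^ δ⁻¹) ^ δ := by
            rw [← Real.rpow_mul zero_le_two, inv_mul_cancel₀ hδ.ne', Real.rpow_one]
        _ ≤ (p : ℝ) ^ δ := by gcongr; exact (Nat.lt_of_floor_lt (not_le.mp hpK)).le
  have hsmall : ∏ p ∈ n.primeFactors, (if p ≤ K then M else 1) ≤ M ^ (K + 1) := by
    rw [prod_ite, prod_const_one, mul_one, prod_const]
    refine pow_le_pow_right₀ hM ?_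
    simpa using card_le_card (fun p hp => mem_range_succ_iff.mpr (mem_filter.mp hp).2 :
      n.primeFactors.filter (· ≤ K) ⊆ range (K + 1))
  have hnδ : (n : ℝ) ^ δ = ∏ p ∈ n.primeFactors, ((p : ℝ) ^ n.factorization p) ^ δ := by
    rw [Real.finsetProd_rpow _ _ (fun _ _ => by positivity)]
    exact_mod_cast congrArg (fun m : ℕ => (m : ℝ) ^ δ) (Nat.prod_primeFactors_pow_factorization hn)
  calc (#n.divisors : ℝ) = ∏ p ∈ n.primeFactors, ((n.factorization p + 1 : ℕ) : ℝ) := by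
        rw [Nat.card_divisors hn, Nat.cast_prod]
    _ ≤ ∏ p ∈ n.primeFactors, (if p ≤ K then M else 1) * ((p : ℝ) ^ n.factorization p) ^ δ :=
        prod_le_prod (fun _ _ => by positivity) hprime
    _ ≤ M ^ (K + 1) * (n : ℝ) ^ δ := by
        rw [prod_mul_distrib, ← hnδ]
        gcongr

lemma harmonic_le_one_add_inv_mul_rpow {δ : ℝ} (hδ : 0 < δ) (n : ℕ) :
    (harmonic n : ℝ) ≤ (1 + δ⁻¹) * (n : ℝ) ^ δ := by
  rcases eq_or_ne n 0 with rfl | hn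
  · simp [Real.zero_rpow hδ.ne']
  have hn1 : (1 : ℝ) ≤ n := by exact_mod_cast Nat.one_le_iff_ne_zero.mpr hn
  calc (harmonic n : ℝ) ≤ 1 + Real.log n := harmonic_le_one_add_log n
    _ ≤ (n : ℝ) ^ δ + (n : ℝ) ^ δ / δ := by
        gcongr
        · exact Real.one_le_rpow hn1 hδ.le
        · exact Real.log_le_rpow_div n.cast_nonneg hδ
    _ = (1 + δ⁻¹) * (n : ℝ) ^ δ := by ring

lemma natCast_harmonic_eq_sum_Icc (n : ℕ) : (harmonic n : ℝ) = ∑ i ∈ Icc 1 n, (i : ℝ)⁻¹ := by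
  rw [harmonic_eq_sum_Icc]
  push_cast
  rfl

lemma lcm_eq_gcd_mul_div_gcd_mul_div_gcd (b c : ℕ) :
    b.lcm c = b.gcd c * (b / b.gcd c) * (c / b.gcd c) := by
  rcases (b.gcd c).eq_zero_or_pos with hg | hg
  · simp [(Nat.gcd_eq_zero_iff.mp hg).1]
  refine Nat.eq_of_mul_eq_mul_left hg ?_
  have hb := Nat.mul_div_cancel' (Nat.gcd_dvd_left b c)
  have hc := Nat.mul_div_cancel' (Nat.gcd_dvd_right b c)
  set g := b.gcd c
  rw [Nat.gcd_mul_lcm]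
  conv_lhs => rw [← hb, ← hc]
  ring

lemma sum_inv_lcm_le_harmonic_pow_three (N : ℕ) :
    ∑ b ∈ Icc 1 N, ∑ c ∈ Icc 1 N, ((b.lcm c : ℕ) : ℝ)⁻¹ ≤ (harmonic N : ℝ) ^ 3 := by
  set A := Icc 1 N
  -- `(b, c) ↦ (g, b / g, c / g)` with `g = gcd b c` is injective and turns `lcm b c` into a
  -- product of three numbers in `[1, N]`.
  set f : ℕ × ℕ → ℕ × ℕ × ℕ := fun q => (q.1.gcd q.2, q.1 / q.1.gcd q.2, q.2 / q.1.gcd q.2)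
  have hf : ∀ q ∈ A ×ˢ A, f q ∈ A ×ˢ A ×ˢ A ∧ q.1.lcm q.2 = (f q).1 * (f q).2.1 * (f q).2.2 := by
    rintro ⟨b, c⟩ hq
    simp only [A, mem_product, mem_Icc] at hq ⊢
    obtain ⟨⟨hb, hbN⟩, hc, hcN⟩ := hq
    have hgb := Nat.le_of_dvd hb (Nat.gcd_dvd_left b c)
    have hgc := Nat.le_of_dvd hc (Nat.gcd_dvd_right b c)
    have hg : 0 < b.gcd c := Nat.gcd_pos_of_pos_left c hb
    exact ⟨⟨⟨hg, hgb.trans hbN⟩, ⟨Nat.div_pos hgb hg, (Nat.div_le_self _ _).trans hbN⟩,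
      Nat.div_pos hgc hg, (Nat.div_le_self _ _).trans hcN⟩, lcm_eq_gcd_mul_div_gcd_mul_div_gcd b c⟩
  have hinj : Set.InjOn f ↑(A ×ˢ A) := by
    have hq : ∀ q : ℕ × ℕ, q = ((f q).1 * (f q).2.1, (f q).1 * (f q).2.2) := fun q => by
      simp only [f, Nat.mul_div_cancel' (Nat.gcd_dvd_left _ _),
        Nat.mul_div_cancel' (Nat.gcd_dvd_right _ _)]
    exact fun q _ q' _ h => by rw [hq q, hq q', h]
  calc ∑ b ∈ A, ∑ c ∈ A, ((b.lcm c : ℕ) : ℝ)⁻¹ = ∑ q ∈ A ×ˢ A, ((q.1.lcm q.2 : ℕ) : ℝ)⁻¹ := by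
        rw [sum_product]
    _ = ∑ t ∈ (A ×ˢ A).image f, ((t.1 : ℝ) * t.2.1 * t.2.2)⁻¹ := by
        rw [sum_image hinj]
        refine sum_congr rfl fun q hq => ?_
        rw [(hf q hq).2]
        push_cast
        rfl
    _ ≤ ∑ t ∈ A ×ˢ A ×ˢ A, ((t.1 : ℝ) * t.2.1 * t.2.2)⁻¹ :=
        sum_le_sum_of_subset_of_nonneg (image_subset_iff.mpr fun q hq => (hf q hq).1)
          fun _ _ _ => by positivity
    _ = (harmonic N : ℝ) ^ 3 := by
        simp only [sum_product, mul_inv, ← mul_sum, ← sum_mul, natCast_harmonic_eq_sum_Icc]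
        ring

lemma sum_inv_mul_lcm_le_harmonic_pow_five (N : ℕ) :
    ∑ p ∈ Icc 1 N ×ˢ Icc 1 N ×ˢ Icc 1 N ×ˢ Icc 1 N,
        ((p.2.2.2 : ℝ) * p.2.2.1 * (p.1.lcm p.2.1 : ℕ))⁻¹ ≤ (harmonic N : ℝ) ^ 5 := by
  calc _ = (∑ b ∈ Icc 1 N, ∑ c ∈ Icc 1 N, ((b.lcm c : ℕ) : ℝ)⁻¹) * (harmonic N : ℝ) ^ 2 := by
        simp only [sum_product, mul_inv, ← mul_sum, ← sum_mul, natCast_harmonic_eq_sum_Icc]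
        ring
    _ ≤ (harmonic N : ℝ) ^ 3 * (harmonic N : ℝ) ^ 2 := by
        gcongr
        exact sum_inv_lcm_le_harmonic_pow_three N
    _ = (harmonic N : ℝ) ^ 5 := by ring

lemma natCast_gcd_div_mul_eq_inv_lcm {b c : ℕ} (hb : b ≠ 0) (hc : c ≠ 0) :
    (b.gcd c : ℝ) / (b * c) = ((b.lcm c : ℕ) : ℝ)⁻¹ := by
  rw [div_eq_iff (by positivity), ← Nat.cast_mul, ← Nat.gcd_mul_lcm b c]
  push_cast
  field_simp

lemma gcd_mul_card_divisors_sq_div_le {b c d j : ℕ} (hb : 0 < b) (hc : 0 < c) (hd : 0 < d)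
    (hj : 0 < j) {T : ℝ} (hT : ∀ n ≤ j * b.lcm c * d, (#n.divisors : ℝ) ≤ T) :
    (b.gcd c : ℝ) * (#j.divisors : ℝ) ^ 2 * (#(d * b.lcm c / b).divisors : ℝ) ^ 2 *
        (#(d * b.lcm c / c).divisors : ℝ) ^ 2 / ((j : ℝ) * d * b * c)
      ≤ T ^ 6 * ((j : ℝ) * d * (b.lcm c : ℕ))⁻¹ := by
  have hL := Nat.lcm_pos hb hc
  have hdL : d * b.lcm c ≤ j * b.lcm c * d := by
    rw [mul_assoc, mul_comm (b.lcm c)]; exact Nat.le_mul_of_pos_left _ hj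
  have hτj := hT j (by rw [mul_assoc]; exact Nat.le_mul_of_pos_right _ (Nat.mul_pos hL hd))
  have hT0 : 0 ≤ T := (Nat.cast_nonneg _).trans hτj
  have hτb := hT _ ((Nat.div_le_self _ b).trans hdL)
  have hτc := hT _ ((Nat.div_le_self _ c).trans hdL)
  calc _ = ((#j.divisors : ℝ) * #(d * b.lcm c / b).divisors * #(d * b.lcm c / c).divisors) ^ 2 *
          ((b.gcd c : ℝ) / (b * c) * ((j : ℝ) * d)⁻¹) := by ring
    _ ≤ (T * T * T) ^ 2 * (((b.lcm c : ℕ) : ℝ)⁻¹ * ((j : ℝ) * d)⁻¹) := by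
        rw [natCast_gcd_div_mul_eq_inv_lcm hb.ne' hc.ne']
        gcongr
    _ = _ := by ring

/-- For every `ε > 0` there is `C > 0` so that for all real `X ≥ 2`,
`∑ gcd(b,c) τ(j)² τ(d[b,c]/b)² τ(d[b,c]/c)² / (j d b c) ≤ C X^ε`, the sum being
over quadruples `(b, c, d, j)` of positive integers with `j · lcm(b,c) · d ≤ √X`. -/
theorem divisor_weight_sum_bound :
    ∀ ε : ℝ, 0 < ε → ∃ C : ℝ, 0 < C ∧ ∀ X : ℝ, 2 ≤ X →
      ∑ p ∈ (Finset.Icc 1 ⌊X⌋₊ ×ˢ Finset.Icc 1 ⌊X⌋₊ ×ˢ Finset.Icc 1 ⌊X⌋₊ ×ˢ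
          Finset.Icc 1 ⌊X⌋₊).filter
          (fun p : ℕ × ℕ × ℕ × ℕ =>
            ((p.2.2.2 * Nat.lcm p.1 p.2.1 * p.2.2.1 : ℕ) : ℝ) ≤ Real.sqrt X),
        (Nat.gcd p.1 p.2.1 : ℝ) * (p.2.2.2.divisors.card : ℝ) ^ 2 *
          ((p.2.2.1 * Nat.lcm p.1 p.2.1 / p.1).divisors.card : ℝ) ^ 2 *
          ((p.2.2.1 * Nat.lcm p.1 p.2.1 / p.2.1).divisors.card : ℝ) ^ 2 /
          ((p.2.2.2 : ℝ) * p.2.2.1 * p.1 * p.2.1) ≤ C * X ^ ε := by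
  intro ε hε
  obtain ⟨δ, hδ, rfl⟩ : ∃ δ > 0, ε = δ * 11 := ⟨ε / 11, by positivity, by ring⟩
  obtain ⟨C, hC, hτ⟩ := exists_card_divisors_le_mul_rpow hδ
  refine ⟨C ^ 6 * (1 + δ⁻¹) ^ 5, by positivity, fun X hX => ?_⟩
  have hX0 : 0 ≤ X := by linarith
  have hτX : ∀ n : ℕ, (n : ℝ) ≤ X → (#n.divisors : ℝ) ≤ C * X ^ δ :=
    fun n hn => (hτ n).trans (by gcongr)
  have hH0 : 0 ≤ (harmonic ⌊X⌋₊ : ℝ) := by rw [natCast_harmonic_eq_sum_Icc]; positivity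
  have hH : (harmonic ⌊X⌋₊ : ℝ) ≤ (1 + δ⁻¹) * X ^ δ :=
    (harmonic_le_one_add_inv_mul_rpow hδ _).trans (by gcongr; exact Nat.floor_le hX0)
  have hsqrt : √X ≤ X := Real.sqrt_le_self_iff.mpr (Or.inr (by linarith))
  calc _ ≤ ∑ p ∈ Icc 1 ⌊X⌋₊ ×ˢ Icc 1 ⌊X⌋₊ ×ˢ Icc 1 ⌊X⌋₊ ×ˢ Icc 1 ⌊X⌋₊,
          (C * X ^ δ) ^ 6 * ((p.2.2.2 : ℝ) * p.2.2.1 * (p.1.lcm p.2.1 : ℕ))⁻¹ := by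
        refine (sum_le_sum fun p hp => ?_).trans
          (sum_le_sum_of_subset_of_nonneg (filter_subset _ _) fun _ _ _ => by positivity)
        simp only [mem_filter, mem_product, mem_Icc] at hp
        obtain ⟨⟨⟨hb, -⟩, ⟨hc, -⟩, ⟨hd, -⟩, ⟨hj, -⟩⟩, hle⟩ := hp
        exact gcd_mul_card_divisors_sq_div_le hb hc hd hj fun n hn =>
          hτX n ((Nat.cast_le.mpr hn).trans (hle.trans hsqrt))
    _ ≤ (C * X ^ δ) ^ 6 * ((1 + δ⁻¹) * X ^ δ) ^ 5 := by
        rw [← mul_sum]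
        gcongr
        exact (sum_inv_mul_lcm_le_harmonic_pow_five _).trans (by gcongr)
    _ = C ^ 6 * (1 + δ⁻¹) ^ 5 * X ^ (δ * 11) := by
        rw [show (11 : ℝ) = (11 : ℕ) by norm_num, Real.rpow_mul_natCast hX0]
        ring
end
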